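/- arXiv:0902.0067 — 6 statements merged into one kernel-verified Lean document; each statement's English description precedes it below -/
import Mathlib

section
/- Let T > 0 and let u : [0,T] → ℝ be continuous such that for every t ∈ [0,T] the limit L(t) := lim_{ε→0+} (1/(2ε)) ∫₀ᵗ 1_{[−ε,ε]}(u(s)) ds exists and the resulting function L is continuous. Let f : [0,T] → ℝ be continuous with strictly positive values. Then for every t ∈ [0,T], lim_{ε→0+} (1/(2ε)) ∫₀ᵗ 1_{[−ε f(s), ε f(s)]}(u(s)) ds = ∫₀ᵗ f(s) dL(s). -/
/-!
On a partition `0 = p₀ ≤ … ≤ pₙ = t` fine enough that `f` stays within `δ` of `f(pᵢ)` on each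
piece, monotonicity of the band in its width squeezes the occupation integral over `[0, t]`
between sums of occupation integrals with constant widths `f(pᵢ) ± δ`. For a constant width `c`
the substitution `ε ↦ cε` turns the definition of `L` into the limit `c (L(pᵢ₊₁) - L(pᵢ))`, so
the two bounds converge to the Stieltjes sums `∑ (f(pᵢ) ± δ)(L(pᵢ₊₁) - L(pᵢ))`. These also
bracket `∫₀ᵗ f dL` and differ by `2δ (L(t) - L(0))`.
-/

open MeasureTheory Filter Set Topology

lemma tendsto_of_forall_sandwich {ι : Type*} {l : Filter ι} {F : ι → ℝ} {x C : ℝ}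
    (h : ∀ᶠ δ in 𝓝[>] 0, ∃ g₁ g₂ : ι → ℝ, ∃ A B : ℝ, Tendsto g₁ l (𝓝 A) ∧ Tendsto g₂ l (𝓝 B) ∧
      (∀ᶠ i in l, F i ∈ Icc (g₁ i) (g₂ i)) ∧ x ∈ Icc A B ∧ B - A ≤ C * δ) :
    Tendsto F l (𝓝 x) := by
  rw [Metric.tendsto_nhds]
  intro η hη
  have hsmall : ∀ᶠ δ in 𝓝[>] (0 : ℝ), C * δ < η / 2 := by
    have : Tendsto (fun δ : ℝ => C * δ) (𝓝[>] 0) (𝓝 0) :=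
      ((continuous_const_mul C).tendsto' 0 0 (mul_zero C)).mono_left nhdsWithin_le_nhds
    exact this.eventually (gt_mem_nhds (half_pos hη))
  obtain ⟨δ, ⟨g₁, g₂, A, B, hg₁, hg₂, hF, hx, hBA⟩, hδ⟩ := (h.and hsmall).exists
  filter_upwards [hF, hg₁.eventually (lt_mem_nhds (sub_lt_self A (half_pos hη))),
    hg₂.eventually (gt_mem_nhds (lt_add_of_pos_right B (half_pos hη)))] with i hFi hi₁ hi₂
  rw [Real.dist_eq, abs_sub_lt_iff]
  constructor <;> linarith [hFi.1, hFi.2, hx.1, hx.2]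

lemma Monotone.Icc_subset_of_lt {p : ℕ → ℝ} (hp : Monotone p) {i n : ℕ} (hi : i < n) :
    Icc (p i) (p (i + 1)) ⊆ Icc (p 0) (p n) :=
  Icc_subset_Icc (hp (Nat.zero_le i)) (hp hi)

noncomputable def uniformPartition (a b : ℝ) (n i : ℕ) : ℝ := a + i * ((b - a) / n)

section UniformPartition

variable {a b : ℝ} {n : ℕ}

@[simp] lemma uniformPartition_zero : uniformPartition a b n 0 = a := by
  simp [uniformPartition]

lemma uniformPartition_self (hn : n ≠ 0) : uniformPartition a b n n = b := by
  have hn' : (n : ℝ) ≠ 0 := Nat.cast_ne_zero.2 hn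
  simp only [uniformPartition]; field_simp; ring

lemma uniformPartition_succ_sub (i : ℕ) :
    uniformPartition a b n (i + 1) - uniformPartition a b n i = (b - a) / n := by
  simp only [uniformPartition]; push_cast; ring

lemma monotone_uniformPartition (hab : a ≤ b) : Monotone (uniformPartition a b n) :=
  monotone_nat_of_le_succ fun i => by
    linarith [uniformPartition_succ_sub (a := a) (b := b) (n := n) i,
      div_nonneg (sub_nonneg.2 hab) n.cast_nonneg]

lemma ContinuousOn.exists_partition_dist_lt {f : ℝ → ℝ} (hab : a ≤ b)
    (hf : ContinuousOn f (Icc a b)) {δ : ℝ} (hδ : 0 < δ) :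
    ∃ (n : ℕ) (p : ℕ → ℝ), Monotone p ∧ p 0 = a ∧ p n = b ∧
      ∀ i < n, ∀ s ∈ Icc (p i) (p (i + 1)), dist (f s) (f (p i)) < δ := by
  obtain ⟨d, hd, hfd⟩ := Metric.uniformContinuousOn_iff.1
    (isCompact_Icc.uniformContinuousOn_of_continuous hf) δ hδ
  obtain ⟨n, hn⟩ := exists_nat_gt ((b - a) / d)
  have hn0 : (0 : ℝ) < n := (div_nonneg (sub_nonneg.2 hab) hd.le).trans_lt hn
  have hmesh : (b - a) / n < d := by
    rw [div_lt_iff₀ hn0]; rw [div_lt_iff₀ hd] at hn; linarith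
  have hn' : n ≠ 0 := Nat.cast_ne_zero.1 hn0.ne'
  have hp := monotone_uniformPartition (n := n) hab
  refine ⟨n, uniformPartition a b n, hp, uniformPartition_zero, uniformPartition_self hn',
    fun i hi s hs => ?_⟩
  have hsub : Icc (uniformPartition a b n i) (uniformPartition a b n (i + 1)) ⊆ Icc a b := by
    simpa [uniformPartition_self hn'] using hp.Icc_subset_of_lt hi
  refine hfd s (hsub hs) _ (hsub (left_mem_Icc.2 (hp (Nat.le_succ i)))) ?_
  rw [Real.dist_eq, abs_of_nonneg (sub_nonneg.2 hs.1)]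
  linarith [hs.2, uniformPartition_succ_sub (a := a) (b := b) (n := n) i]

end UniformPartition

lemma intervalIntegrable_indicator_Icc_comp {u r : ℝ → ℝ} {a b : ℝ}
    (hu : ContinuousOn u (uIcc a b)) (hr : ContinuousOn r (uIcc a b)) :
    IntervalIntegrable (fun s => (Icc (-r s) (r s)).indicator (fun _ => (1 : ℝ)) (u s))
      volume a b := by
  have hband : MeasurableSet {q : ℝ × ℝ | q.1 ∈ Icc (-q.2) q.2} :=
    ((isClosed_le continuous_snd.neg continuous_fst).inter
      (isClosed_le continuous_fst continuous_snd)).measurableSet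
  have hmeas : Measurable fun q : ℝ × ℝ => (Icc (-q.2) q.2).indicator (fun _ => (1 : ℝ)) q.1 :=
    Measurable.ite hband measurable_const measurable_const
  refine intervalIntegrable_const (c := (1 : ℝ)).mono_fun ?_ (Eventually.of_forall fun s => ?_)
  · have h := (hu.mono uIoc_subset_uIcc).aemeasurable (μ := volume) measurableSet_uIoc
    exact (hmeas.comp_aemeasurable (h.prodMk
      ((hr.mono uIoc_subset_uIcc).aemeasurable measurableSet_uIoc))).aestronglyMeasurable
  · simp only [indicator_apply, norm_one]
    split_ifs <;> simp

lemma setIntegral_mem_Icc_mul_measureReal {X : Type*} [MeasurableSpace X] {μ : Measure X}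
    {f : X → ℝ} {s : Set X} {c₁ c₂ : ℝ} (hs : MeasurableSet s) (hμs : μ s ≠ ⊤)
    (hf : IntegrableOn f s μ) (h : ∀ x ∈ s, f x ∈ Icc c₁ c₂) :
    ∫ x in s, f x ∂μ ∈ Icc (c₁ * μ.real s) (c₂ * μ.real s) := by
  refine ⟨setIntegral_ge_of_const_le_real hs hμs (fun x hx => (h x hx).1) hf, ?_⟩
  have h_neg := setIntegral_ge_of_const_le_real hs hμs (c := -c₂) (f := fun x => -f x)
    (fun x hx => neg_le_neg (h x hx).2) hf.neg
  rw [integral_neg] at h_neg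
  linarith

lemma setIntegral_Ioc_mem_Icc_sum {μ : Measure ℝ} {f : ℝ → ℝ} {p : ℕ → ℝ} (hp : Monotone p)
    {n : ℕ} {c₁ c₂ : ℕ → ℝ} (hf : ContinuousOn f (Icc (p 0) (p n)))
    (hμ : μ (Ioc (p 0) (p n)) ≠ ⊤)
    (h : ∀ i < n, ∀ s ∈ Icc (p i) (p (i + 1)), f s ∈ Icc (c₁ i) (c₂ i)) :
    ∫ s in Ioc (p 0) (p n), f s ∂μ ∈
      Icc (∑ i ∈ Finset.range n, c₁ i * μ.real (Ioc (p i) (p (i + 1))))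
        (∑ i ∈ Finset.range n, c₂ i * μ.real (Ioc (p i) (p (i + 1)))) := by
  have hint : IntegrableOn f (Ioc (p 0) (p n)) μ :=
    hf.integrableOn_of_subset_isCompact isCompact_Icc measurableSet_Ioc Ioc_subset_Icc_self hμ
  have hsub : ∀ i < n, Ioc (p i) (p (i + 1)) ⊆ Ioc (p 0) (p n) :=
    fun i hi => Ioc_subset_Ioc (hp (Nat.zero_le i)) (hp hi)
  have hpiece : ∀ i ∈ Finset.range n, ∫ s in Ioc (p i) (p (i + 1)), f s ∂μ ∈
      Icc (c₁ i * μ.real (Ioc (p i) (p (i + 1)))) (c₂ i * μ.real (Ioc (p i) (p (i + 1)))) :=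
    fun i hi => setIntegral_mem_Icc_mul_measureReal measurableSet_Ioc
      (measure_ne_top_of_subset (hsub i (Finset.mem_range.1 hi)) hμ)
      (hint.mono_set (hsub i (Finset.mem_range.1 hi)))
      fun s hs => h i (Finset.mem_range.1 hi) s (Ioc_subset_Icc_self hs)
  have hsum : ∫ s in Ioc (p 0) (p n), f s ∂μ =
      ∑ i ∈ Finset.range n, ∫ s in Ioc (p i) (p (i + 1)), f s ∂μ := by
    rw [← intervalIntegral.integral_of_le (hp (Nat.zero_le n)),
      ← intervalIntegral.sum_integral_adjacent_intervals fun i hi =>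
        (intervalIntegrable_iff_integrableOn_Ioc_of_le (hp i.le_succ)).2
          (hint.mono_set (hsub i hi))]
    exact Finset.sum_congr rfl fun i _ => intervalIntegral.integral_of_le (hp i.le_succ)
  rw [hsum]
  exact ⟨Finset.sum_le_sum fun i hi => (hpiece i hi).1,
    Finset.sum_le_sum fun i hi => (hpiece i hi).2⟩

noncomputable def scaledOccupation (u r : ℝ → ℝ) (a b ε : ℝ) : ℝ :=
  (1 / (2 * ε)) * ∫ s in a..b, (Icc (-(ε * r s)) (ε * r s)).indicator (fun _ => (1 : ℝ)) (u s)

section ScaledOccupation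

variable {u r : ℝ → ℝ} {S : Set ℝ} {a b ε : ℝ}

lemma intervalIntegrable_indicator_Icc_mul_comp (hu : ContinuousOn u S) (hr : ContinuousOn r S)
    (h : uIcc a b ⊆ S) (ε : ℝ) :
    IntervalIntegrable (fun s => (Icc (-(ε * r s)) (ε * r s)).indicator (fun _ => (1 : ℝ)) (u s))
      volume a b :=
  intervalIntegrable_indicator_Icc_comp (hu.mono h) ((continuousOn_const.mul hr).mono h)

lemma scaledOccupation_sub {x : ℝ} (hu : ContinuousOn u S) (hr : ContinuousOn r S)
    (ha : uIcc x a ⊆ S) (hb : uIcc x b ⊆ S) :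
    scaledOccupation u r x b ε - scaledOccupation u r x a ε = scaledOccupation u r a b ε := by
  simp only [scaledOccupation, ← mul_sub]
  rw [intervalIntegral.integral_interval_sub_left
    (intervalIntegrable_indicator_Icc_mul_comp hu hr hb ε)
    (intervalIntegrable_indicator_Icc_mul_comp hu hr ha ε)]

lemma scaledOccupation_eq_sum {p : ℕ → ℝ} (hp : Monotone p) {n : ℕ}
    (hu : ContinuousOn u (Icc (p 0) (p n))) (hr : ContinuousOn r (Icc (p 0) (p n))) (ε : ℝ) :
    scaledOccupation u r (p 0) (p n) ε =
      ∑ i ∈ Finset.range n, scaledOccupation u r (p i) (p (i + 1)) ε := by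
  simp only [scaledOccupation, ← Finset.mul_sum]
  rw [intervalIntegral.sum_integral_adjacent_intervals fun i hi =>
    intervalIntegrable_indicator_Icc_mul_comp hu hr ((uIcc_of_le (hp i.le_succ)).trans_subset
      (hp.Icc_subset_of_lt hi)) ε]

lemma scaledOccupation_mono {r' : ℝ → ℝ} (hε : 0 ≤ ε) (hab : a ≤ b)
    (hu : ContinuousOn u (Icc a b)) (hr : ContinuousOn r (Icc a b))
    (hr' : ContinuousOn r' (Icc a b)) (h : ∀ s ∈ Icc a b, r s ≤ r' s) :
    scaledOccupation u r a b ε ≤ scaledOccupation u r' a b ε := by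
  have hS : uIcc a b ⊆ Icc a b := (uIcc_of_le hab).subset
  refine mul_le_mul_of_nonneg_left (intervalIntegral.integral_mono_on hab
    (intervalIntegrable_indicator_Icc_mul_comp hu hr hS ε)
    (intervalIntegrable_indicator_Icc_mul_comp hu hr' hS ε) fun s hs => ?_)
    (by positivity)
  have hle : ε * r s ≤ ε * r' s := mul_le_mul_of_nonneg_left (h s hs) hε
  exact indicator_le_indicator_of_subset (Icc_subset_Icc (neg_le_neg hle) hle)
    (fun _ => zero_le_one) (u s)

lemma scaledOccupation_mem_Icc_sum {p : ℕ → ℝ} (hp : Monotone p) {n : ℕ} {c₁ c₂ : ℕ → ℝ}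
    (hε : 0 ≤ ε) (hu : ContinuousOn u (Icc (p 0) (p n))) (hr : ContinuousOn r (Icc (p 0) (p n)))
    (h : ∀ i < n, ∀ s ∈ Icc (p i) (p (i + 1)), r s ∈ Icc (c₁ i) (c₂ i)) :
    scaledOccupation u r (p 0) (p n) ε ∈
      Icc (∑ i ∈ Finset.range n, scaledOccupation u (fun _ => c₁ i) (p i) (p (i + 1)) ε)
        (∑ i ∈ Finset.range n, scaledOccupation u (fun _ => c₂ i) (p i) (p (i + 1)) ε) := by
  rw [scaledOccupation_eq_sum hp hu hr]
  refine ⟨Finset.sum_le_sum fun i hi => ?_, Finset.sum_le_sum fun i hi => ?_⟩ <;>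
    rw [Finset.mem_range] at hi
  · exact scaledOccupation_mono hε (hp i.le_succ) (hu.mono (hp.Icc_subset_of_lt hi))
      continuousOn_const (hr.mono (hp.Icc_subset_of_lt hi)) fun s hs => (h i hi s hs).1
  · exact scaledOccupation_mono hε (hp i.le_succ) (hu.mono (hp.Icc_subset_of_lt hi))
      (hr.mono (hp.Icc_subset_of_lt hi)) continuousOn_const fun s hs => (h i hi s hs).2

lemma scaledOccupation_const {c : ℝ} (hc : c ≠ 0) :
    scaledOccupation u (fun _ => c) a b ε = c * scaledOccupation u (fun _ => 1) a b (c * ε) := by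
  simp only [scaledOccupation, mul_one, mul_comm ε c]
  field_simp

lemma tendsto_scaledOccupation_const {T : ℝ} {L : ℝ → ℝ} (hu : ContinuousOn u (Icc 0 T))
    (hL : ∀ t ∈ Icc 0 T, Tendsto (scaledOccupation u (fun _ => 1) 0 t) (𝓝[>] 0) (𝓝 (L t)))
    {c : ℝ} (hc : 0 < c) (ha : a ∈ Icc 0 T) (hb : b ∈ Icc 0 T) :
    Tendsto (scaledOccupation u (fun _ => c) a b) (𝓝[>] 0) (𝓝 (c * (L b - L a))) := by
  have hmul : Tendsto (c * ·) (𝓝[>] (0 : ℝ)) (𝓝[>] 0) :=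
    tendsto_comap.mono_left (comap_mulLeft_nhdsGT_zero hc).ge
  have hscale : ∀ t ∈ Icc 0 T,
      Tendsto (scaledOccupation u (fun _ => c) 0 t) (𝓝[>] 0) (𝓝 (c * L t)) := fun t ht =>
    (((hL t ht).comp hmul).const_mul c).congr fun _ => (scaledOccupation_const hc.ne').symm
  have h0 : (0 : ℝ) ∈ Icc 0 T := ⟨le_rfl, ha.1.trans ha.2⟩
  rw [mul_sub]
  exact ((hscale b hb).sub (hscale a ha)).congr fun ε =>
    scaledOccupation_sub hu continuousOn_const (uIcc_subset_Icc h0 ha) (uIcc_subset_Icc h0 hb)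

end ScaledOccupation

lemma sum_add_mul_sub_sum_sub_mul (c g : ℕ → ℝ) (δ : ℝ) (n : ℕ) :
    ∑ i ∈ Finset.range n, (c i + δ) * (g (i + 1) - g i) -
        ∑ i ∈ Finset.range n, (c i - δ) * (g (i + 1) - g i) = 2 * δ * (g n - g 0) := by
  rw [← Finset.sum_sub_distrib, ← Finset.sum_range_sub, Finset.mul_sum]
  exact Finset.sum_congr rfl fun _ _ => by ring

theorem tendsto_scaledOccupation {t : ℝ} {u L f : ℝ → ℝ} {μ : Measure ℝ} (ht : 0 ≤ t)
    (hu : ContinuousOn u (Icc 0 t))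
    (hL : ∀ s ∈ Icc 0 t, Tendsto (scaledOccupation u (fun _ => 1) 0 s) (𝓝[>] 0) (𝓝 (L s)))
    (hLmono : MonotoneOn L (Icc 0 t))
    (hf : ContinuousOn f (Icc 0 t)) (hfpos : ∀ s ∈ Icc 0 t, 0 < f s)
    (hμ : ∀ a b, 0 ≤ a → a ≤ b → b ≤ t → μ (Ioc a b) = ENNReal.ofReal (L b - L a)) :
    Tendsto (scaledOccupation u f 0 t) (𝓝[>] 0) (𝓝 (∫ s in Ioc 0 t, f s ∂μ)) := by
  obtain ⟨s₀, hs₀, hmin⟩ := isCompact_Icc.exists_isMinOn (nonempty_Icc.2 ht) hf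
  refine tendsto_of_forall_sandwich (C := 2 * (L t - L 0)) ?_
  -- `δ < min f` keeps the lower widths `f(pᵢ) - δ` positive, as the scaling argument needs.
  filter_upwards [Ioo_mem_nhdsGT (hfpos s₀ hs₀)] with δ ⟨hδ, hδf⟩
  obtain ⟨n, p, hp, hp0, hpn, hosc⟩ := hf.exists_partition_dist_lt ht hδ
  have hpI : Icc (p 0) (p n) = Icc 0 t := by rw [hp0, hpn]
  have hpmem : ∀ i ≤ n, p i ∈ Icc 0 t := fun i hi => hpI ▸ ⟨hp i.zero_le, hp hi⟩
  have hband : ∀ i < n, ∀ s ∈ Icc (p i) (p (i + 1)), f s ∈ Icc (f (p i) - δ) (f (p i) + δ) :=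
    fun i hi s hs => by
      have := abs_lt.1 (hosc i hi s hs)
      constructor <;> linarith
  have hlow : ∀ i < n, 0 < f (p i) - δ := fun i hi => by
    linarith [isMinOn_iff.1 hmin _ (hpmem i hi.le)]
  have hΔL : ∀ c : ℕ → ℝ, ∑ i ∈ Finset.range n, c i * μ.real (Ioc (p i) (p (i + 1))) =
      ∑ i ∈ Finset.range n, c i * (L (p (i + 1)) - L (p i)) := fun c =>
    Finset.sum_congr rfl fun i hi => by
      have hi := Finset.mem_range.1 hi
      rw [measureReal_def, hμ _ _ (hpmem i hi.le).1 (hp i.le_succ) (hpmem (i + 1) hi).2,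
        ENNReal.toReal_ofReal (sub_nonneg.2 (hLmono (hpmem i hi.le) (hpmem (i + 1) hi)
          (hp i.le_succ)))]
  refine ⟨fun ε => ∑ i ∈ Finset.range n,
      scaledOccupation u (fun _ => f (p i) - δ) (p i) (p (i + 1)) ε,
    fun ε => ∑ i ∈ Finset.range n, scaledOccupation u (fun _ => f (p i) + δ) (p i) (p (i + 1)) ε,
    ∑ i ∈ Finset.range n, (f (p i) - δ) * (L (p (i + 1)) - L (p i)),
    ∑ i ∈ Finset.range n, (f (p i) + δ) * (L (p (i + 1)) - L (p i)), ?_, ?_, ?_, ?_, ?_⟩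
  · refine tendsto_finsetSum _ fun i hi => ?_
    rw [Finset.mem_range] at hi
    exact tendsto_scaledOccupation_const hu hL (hlow i hi) (hpmem i hi.le) (hpmem (i + 1) hi)
  · refine tendsto_finsetSum _ fun i hi => ?_
    rw [Finset.mem_range] at hi
    exact tendsto_scaledOccupation_const hu hL (by linarith [hlow i hi]) (hpmem i hi.le)
      (hpmem (i + 1) hi)
  · filter_upwards [self_mem_nhdsWithin] with ε (hε : 0 < ε)
    have := scaledOccupation_mem_Icc_sum hp hε.le (hpI ▸ hu) (hpI ▸ hf) hband
    rwa [hp0, hpn] at this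
  · have hfin : μ (Ioc (p 0) (p n)) ≠ ⊤ := by
      rw [hp0, hpn, hμ 0 t le_rfl ht le_rfl]; exact ENNReal.ofReal_ne_top
    have := setIntegral_Ioc_mem_Icc_sum hp (hpI ▸ hf) hfin hband
    rwa [hp0, hpn, hΔL, hΔL] at this
  · rw [sum_add_mul_sub_sum_sub_mul (fun i => f (p i)) (fun i => L (p i)), hp0, hpn]
    exact (mul_right_comm _ _ _).le

theorem local_time_scaling_continuous_general
    (T : ℝ)
    (u : ℝ → ℝ) (hu : ContinuousOn u (Icc 0 T))
    (L : ℝ → ℝ)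
    (hLlim : ∀ t ∈ Icc (0:ℝ) T,
      Tendsto (fun ε : ℝ =>
          (1 / (2 * ε)) * ∫ s in (0:ℝ)..t, (Icc (-ε) ε).indicator (fun _ => (1:ℝ)) (u s))
        (nhdsWithin 0 (Ioi 0)) (nhds (L t)))
    (hLmono : MonotoneOn L (Icc 0 T))
    (f : ℝ → ℝ) (hf : ContinuousOn f (Icc 0 T)) (hfpos : ∀ s ∈ Icc (0:ℝ) T, 0 < f s)
    (μ : Measure ℝ)
    (hμ : ∀ a b : ℝ, 0 ≤ a → a ≤ b → b ≤ T → μ (Ioc a b) = ENNReal.ofReal (L b - L a)) :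
    ∀ t ∈ Icc (0:ℝ) T,
      Tendsto (fun ε : ℝ =>
          (1 / (2 * ε)) *
            ∫ s in (0:ℝ)..t, (Icc (-(ε * f s)) (ε * f s)).indicator (fun _ => (1:ℝ)) (u s))
        (nhdsWithin 0 (Ioi 0)) (nhds (∫ s in Ioc (0:ℝ) t, f s ∂μ)) := by
  intro t ht
  have hsub : Icc 0 t ⊆ Icc 0 T := Icc_subset_Icc_right ht.2
  exact tendsto_scaledOccupation ht.1 (hu.mono hsub)
    (fun s hs => (hLlim s (hsub hs)).congr fun ε => by simp [scaledOccupation])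
    (hLmono.mono hsub) (hf.mono hsub) (fun s hs => hfpos s (hsub hs))
    (fun a b ha hab hb => hμ a b ha hab (hb.trans ht.2))

/-- Lemma 2, part (ii): if `u` has a local time `L` at level `0` on `[0,T]` and `f` is a
continuous strictly positive function, then
`(1/(2ε)) ∫₀ᵗ 1_{[-ε f(s), ε f(s)]}(u(s)) ds → ∫₀ᵗ f dL` as `ε → 0+`.
The Lebesgue–Stieltjes integral is encoded via a measure `μ` with
`μ(Ioc a b) = L b - L a` for `0 ≤ a ≤ b ≤ T`. -/
theorem local_time_scaling_continuous
    (T : ℝ) (hT : 0 < T)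
    (u : ℝ → ℝ) (hu : ContinuousOn u (Icc 0 T))
    (L : ℝ → ℝ)
    (hLlim : ∀ t ∈ Icc (0:ℝ) T,
      Tendsto (fun ε : ℝ =>
          (1 / (2 * ε)) * ∫ s in (0:ℝ)..t, (Icc (-ε) ε).indicator (fun _ => (1:ℝ)) (u s))
        (nhdsWithin 0 (Ioi 0)) (nhds (L t)))
    (hLmono : MonotoneOn L (Icc 0 T)) (hL0 : L 0 = 0)
    (hLcont : ContinuousOn L (Icc 0 T))
    (f : ℝ → ℝ) (hf : ContinuousOn f (Icc 0 T)) (hfpos : ∀ s ∈ Icc (0:ℝ) T, 0 < f s)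
    (μ : Measure ℝ)
    (hμ : ∀ a b : ℝ, 0 ≤ a → a ≤ b → b ≤ T → μ (Ioc a b) = ENNReal.ofReal (L b - L a)) :
    ∀ t ∈ Icc (0:ℝ) T,
      Tendsto (fun ε : ℝ =>
          (1 / (2 * ε)) *
            ∫ s in (0:ℝ)..t, (Icc (-(ε * f s)) (ε * f s)).indicator (fun _ => (1:ℝ)) (u s))
        (nhdsWithin 0 (Ioi 0)) (nhds (∫ s in Ioc (0:ℝ) t, f s ∂μ)) :=
  local_time_scaling_continuous_general T u hu L hLlim hLmono f hf hfpos μ hμ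
end

section
/- Let T > 0 and let x = (x₁, x₂) : [0,T] → ℝ² be a continuous path with x₁(s) > 0 for all s ∈ [0,T]. Write r(s) = √(x₁(s)² + x₂(s)²) > 0 and φ(s) = arctan(x₂(s)/x₁(s)) ∈ (−π/2, π/2) for the polar coordinates of x(s). Assume that for every t ∈ [0,T] the limit L(t) := lim_{ε→0+} (1/(2ε)) ∫₀ᵗ 1_{[−ε,ε]}(x₂(s)) ds exists and the resulting function L is continuous. Then for every t ∈ [0,T] the limit lim_{ε→0+} (1/(2ε)) ∫₀ᵗ 1_{[−ε,ε]}(φ(s)) ds exists and equals ∫₀ᵗ r(s) dL(s); that is, the local time of the angular component φ at level 0 equals the Stieltjes integral of r against the local time of x₂ at level 0. -/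
/-!
For `x₁ > 0`, the angle `φ = arctan (x₂ / x₁)` lies in `[-ε, ε]` exactly when
`|x₂| ≤ x₁ tan ε`. On a short time interval on which `x₁` stays within `θ` of a constant `c`,
the time `φ` spends in `[-ε, ε]` is therefore squeezed between the times `x₂` spends in
`[-(c ∓ θ) tan ε, (c ∓ θ) tan ε]`; since `tan ε ~ ε`, after normalisation by `2ε` these tend to
`(c ∓ θ)` times the increment of `L`. Adding up over a fine partition pins the local time of `φ`
down to within `2θ L(t)` of `∫ x₁ dL`. Finally `∫ x₁ dL = ∫ r dL`, because `dL` charges no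
interval on which `x₂` stays away from `0`, and `r = x₁` where `x₂ = 0`.
-/

open MeasureTheory Filter Set Topology Real

open scoped ENNReal

/-- `A ≤ liminf f` and `limsup f ≤ B` along `l`, in a form that is additive in `f`. -/
def SqueezedBetween {α : Type*} (l : Filter α) (f : α → ℝ) (A B : ℝ) : Prop :=
  ∃ lo hi : α → ℝ, Tendsto lo l (𝓝 A) ∧ Tendsto hi l (𝓝 B) ∧ ∀ᶠ x in l, lo x ≤ f x ∧ f x ≤ hi x

section Squeeze

variable {α : Type*} {l : Filter α} {f g : α → ℝ} {A B A' B' I : ℝ}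

theorem SqueezedBetween.add (hf : SqueezedBetween l f A B) (hg : SqueezedBetween l g A' B') :
    SqueezedBetween l (fun x => f x + g x) (A + A') (B + B') := by
  obtain ⟨lo, hi, hlo, hhi, hle⟩ := hf
  obtain ⟨lo', hi', hlo', hhi', hle'⟩ := hg
  refine ⟨fun x => lo x + lo' x, fun x => hi x + hi' x, hlo.add hlo', hhi.add hhi', ?_⟩
  filter_upwards [hle, hle'] with x h h'
  exact ⟨add_le_add h.1 h'.1, add_le_add h.2 h'.2⟩

theorem tendsto_of_forall_squeezedBetween
    (h : ∀ η > 0, ∃ A B, A ≤ I ∧ I ≤ B ∧ B - A ≤ η ∧ SqueezedBetween l f A B) :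
    Tendsto f l (𝓝 I) := by
  refine tendsto_order.2 ⟨fun a ha => ?_, fun b hb => ?_⟩
  · obtain ⟨A, B, -, hIB, hAB, hsq⟩ := h ((I - a) / 2) (by linarith)
    obtain ⟨lo, _, hlo, _, hle⟩ := hsq
    filter_upwards [hlo.eventually (eventually_gt_nhds (show a < A by linarith)), hle]
      with x hx hx'
    linarith [hx'.1]
  · obtain ⟨A, B, hAI, -, hAB, hsq⟩ := h ((b - I) / 2) (by linarith)
    obtain ⟨_, hi, _, hhi, hle⟩ := hsq
    filter_upwards [hhi.eventually (eventually_lt_nhds (show B < b by linarith)), hle]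
      with x hx hx'
    linarith [hx'.2]

end Squeeze

theorem holds_of_trans_of_sub_lt {P : ℝ → ℝ → Prop} {a b κ : ℝ} (hκ : 0 < κ) (hab : a ≤ b)
    (htrans : ∀ x y z, a ≤ x → x ≤ y → y ≤ z → z ≤ b → P x y → P y z → P x z)
    (hsmall : ∀ x y, a ≤ x → x ≤ y → y ≤ b → y - x < κ → P x y) : P a b := by
  have key : ∀ n : ℕ, ∀ y, a ≤ y → y ≤ b → y - a ≤ n * (κ / 2) → P a y := by
    intro n
    induction n with
    | zero =>
      intro y hay hyb hy
      exact hsmall a y le_rfl hay hyb (by push_cast at hy; linarith)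
    | succ n ih =>
      intro y hay hyb hy
      set x := max a (y - κ / 2)
      have hax : a ≤ x := le_max_left _ _
      have hxy : x ≤ y := max_le hay (by linarith)
      have hx : x - a ≤ n * (κ / 2) := by
        push_cast at hy
        rcases max_cases a (y - κ / 2) with ⟨h, -⟩ | ⟨h, -⟩ <;> simp only [x, h]
        · rw [sub_self]; positivity
        · linarith
      exact htrans a x y le_rfl hax hxy hyb (ih x hax (hxy.trans hyb) hx)
        (hsmall x y hax hxy hyb (by linarith [le_max_right a (y - κ / 2)]))
  obtain ⟨n, hn⟩ := exists_nat_ge ((b - a) / (κ / 2))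
  exact key n b hab le_rfl (by rwa [div_le_iff₀ (by positivity)] at hn)

noncomputable def occupation (g : ℝ → ℝ) (a b ε : ℝ) : ℝ :=
  ∫ s in a..b, (Icc (-ε) ε).indicator (fun _ => (1 : ℝ)) (g s)

section Occupation

variable {g h : ℝ → ℝ} {a b c ε δ : ℝ}

theorem intervalIntegrable_indicator_comp (hab : a ≤ b) (hg : ContinuousOn g (Icc a b)) :
    IntervalIntegrable (fun s => (Icc (-ε) ε).indicator (fun _ => (1 : ℝ)) (g s)) volume a b := by
  rw [intervalIntegrable_iff_integrableOn_Ioc_of_le hab]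
  have hmeas : AEMeasurable g (volume.restrict (Ioc a b)) :=
    (hg.mono Ioc_subset_Icc_self).aemeasurable measurableSet_Ioc
  refine (integrableOn_const (C := (1 : ℝ)) measure_Ioc_lt_top.ne).mono'
    ((measurable_const.indicator measurableSet_Icc).comp_aemeasurable hmeas).aestronglyMeasurable
    (ae_of_all _ fun s => ?_)
  by_cases hs : g s ∈ Icc (-ε) ε <;> simp [hs]

theorem occupation_nonneg (hab : a ≤ b) : 0 ≤ occupation g a b ε :=
  intervalIntegral.integral_nonneg hab fun _ _ => indicator_nonneg (fun _ _ => zero_le_one) _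

theorem occupation_add (hab : a ≤ b) (hbc : b ≤ c) (hg : ContinuousOn g (Icc a c)) :
    occupation g a b ε + occupation g b c ε = occupation g a c ε :=
  intervalIntegral.integral_add_adjacent_intervals
    (intervalIntegrable_indicator_comp hab (hg.mono (Icc_subset_Icc_right hbc)))
    (intervalIntegrable_indicator_comp hbc (hg.mono (Icc_subset_Icc_left hab)))

theorem occupation_mono (hab : a ≤ b) (hg : ContinuousOn g (Icc a b))
    (hh : ContinuousOn h (Icc a b))
    (hmem : ∀ s ∈ Icc a b, g s ∈ Icc (-ε) ε → h s ∈ Icc (-δ) δ) :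
    occupation g a b ε ≤ occupation h a b δ := by
  refine intervalIntegral.integral_mono_on hab (intervalIntegrable_indicator_comp hab hg)
    (intervalIntegrable_indicator_comp hab hh) fun s hs => ?_
  by_cases hgs : g s ∈ Icc (-ε) ε
  · simp [hgs, hmem s hs hgs]
  · simp only [indicator_of_notMem hgs]
    exact indicator_nonneg (fun _ _ => zero_le_one) _

theorem occupation_eq_zero_of_lt_abs (hε : ε < δ) (hg : ∀ s ∈ uIcc a b, δ < |g s|) :
    occupation g a b ε = 0 := by
  refine (intervalIntegral.integral_congr fun s hs => ?_).trans intervalIntegral.integral_zero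
  have : g s ∉ Icc (-ε) ε := fun hmem => by linarith [abs_le.2 hmem, hg s hs]
  simp [this]

end Occupation

theorem tendsto_tan_div_self : Tendsto (fun ε => tan ε / ε) (𝓝[>] 0) (𝓝 1) := by
  have h := (hasDerivAt_tan (x := 0) (by simp)).tendsto_slope_zero_right
  simpa [div_eq_inv_mul] using h

theorem tendsto_comp_mul_tan {G : ℝ → ℝ} {c ℓ : ℝ} (hc : 0 < c)
    (hG : Tendsto (fun δ => 1 / (2 * δ) * G δ) (𝓝[>] 0) (𝓝 ℓ)) :
    Tendsto (fun ε => 1 / (2 * ε) * G (c * tan ε)) (𝓝[>] 0) (𝓝 (c * ℓ)) := by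
  have hmap : Tendsto (fun ε => c * tan ε) (𝓝[>] 0) (𝓝[>] 0) := by
    refine tendsto_nhdsWithin_of_tendsto_nhds_of_eventually_within _ ?_ ?_
    · simpa using ((continuousAt_tan (x := 0) |>.2 (by simp)).const_mul c).tendsto.mono_left
        (nhdsWithin_le_nhds (s := Ioi (0 : ℝ)))
    · filter_upwards [Ioo_mem_nhdsGT (show (0 : ℝ) < π / 2 by positivity)] with ε hε
      exact mul_pos hc (tan_pos_of_pos_of_lt_pi_div_two hε.1 hε.2)
  have h := (tendsto_tan_div_self.const_mul c).mul (hG.comp hmap)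
  rw [mul_one] at h
  refine h.congr' ?_
  filter_upwards [Ioo_mem_nhdsGT (show (0 : ℝ) < π / 2 by positivity)] with ε ⟨hε0, hεπ⟩
  have htan : 0 < tan ε := tan_pos_of_pos_of_lt_pi_div_two hε0 hεπ
  simp only [Function.comp_apply]
  field_simp

theorem arctan_mem_Icc_iff {u ε : ℝ} (h0 : 0 < ε) (hε : ε < π / 2) :
    arctan u ∈ Icc (-ε) ε ↔ u ∈ Icc (-tan ε) (tan ε) := by
  have h : ε = arctan (tan ε) := (arctan_tan (by linarith) hε).symm
  rw [h, ← arctan_neg, mem_Icc, mem_Icc, arctan_le_arctan_iff, arctan_le_arctan_iff, ← h]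

theorem ContinuousOn.integrableOn_Ioc_of_ne_top {f : ℝ → ℝ} {μ : Measure ℝ} {a b : ℝ}
    (hf : ContinuousOn f (Icc a b)) (hμ : μ (Ioc a b) ≠ ∞) : IntegrableOn f (Ioc a b) μ := by
  obtain ⟨M, hM⟩ := isCompact_Icc.exists_bound_of_continuousOn hf
  exact (integrableOn_const (C := M) hμ).mono'
    ((hf.mono Ioc_subset_Icc_self).aestronglyMeasurable measurableSet_Ioc)
    ((ae_restrict_iff' measurableSet_Ioc).2
      (ae_of_all _ fun s hs => hM s (Ioc_subset_Icc_self hs)))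

/-- `μ` is the Stieltjes measure `dL` of the local time `L` of `g` at level `0` on `[a, b]`. -/
def IsLocalTimeMeasure (g : ℝ → ℝ) (μ : Measure ℝ) (a b : ℝ) : Prop :=
  ∀ x y, a ≤ x → x ≤ y → y ≤ b → μ (Ioc x y) ≠ ∞ ∧
    Tendsto (fun ε => 1 / (2 * ε) * occupation g x y ε) (𝓝[>] 0) (𝓝 (μ.real (Ioc x y)))

namespace IsLocalTimeMeasure

variable {g : ℝ → ℝ} {μ : Measure ℝ} {a b : ℝ}

theorem of_tendsto {L : ℝ → ℝ} (hg : ContinuousOn g (Icc a b))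
    (hL : ∀ t ∈ Icc a b,
      Tendsto (fun ε => 1 / (2 * ε) * occupation g a t ε) (𝓝[>] 0) (𝓝 (L t)))
    (hμ : ∀ x y, a ≤ x → x ≤ y → y ≤ b → μ (Ioc x y) = ENNReal.ofReal (L y - L x)) :
    IsLocalTimeMeasure g μ a b := by
  intro x y hax hxy hyb
  have hlim : Tendsto (fun ε => 1 / (2 * ε) * occupation g x y ε) (𝓝[>] 0)
      (𝓝 (L y - L x)) := by
    refine ((hL y ⟨hax.trans hxy, hyb⟩).sub (hL x ⟨hax, hxy.trans hyb⟩)).congr fun ε => ?_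
    rw [← occupation_add hax hxy (hg.mono (Icc_subset_Icc_right hyb))]
    ring
  have hnonneg : 0 ≤ L y - L x :=
    ge_of_tendsto hlim (eventually_mem_nhdsWithin.mono fun ε (hε : 0 < ε) =>
      mul_nonneg (by positivity) (occupation_nonneg hxy))
  rw [measureReal_def, hμ x y hax hxy hyb, ENNReal.toReal_ofReal hnonneg]
  exact ⟨ENNReal.ofReal_ne_top, hlim⟩

theorem mono (h : IsLocalTimeMeasure g μ a b) {a' b' : ℝ} (ha : a ≤ a') (hb : b' ≤ b) :
    IsLocalTimeMeasure g μ a' b' :=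
  fun x y hx hxy hy => h x y (ha.trans hx) hxy (hy.trans hb)

theorem measure_Ioc_eq_zero (h : IsLocalTimeMeasure g μ a b) (hab : a ≤ b) {δ : ℝ}
    (hδ : 0 < δ) (hg : ∀ s ∈ Icc a b, δ < |g s|) : μ (Ioc a b) = 0 := by
  obtain ⟨hfin, hlim⟩ := h a b le_rfl hab le_rfl
  have hzero : Tendsto (fun ε => 1 / (2 * ε) * occupation g a b ε) (𝓝[>] 0) (𝓝 0) := by
    refine tendsto_const_nhds.congr' ?_
    filter_upwards [Ioo_mem_nhdsGT hδ] with ε hε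
    rw [occupation_eq_zero_of_lt_abs hε.2 (by rwa [uIcc_of_le hab]), mul_zero]
  rw [← measureReal_eq_zero_iff hfin]
  exact tendsto_nhds_unique hlim hzero

theorem ae_eq_zero (h : IsLocalTimeMeasure g μ a b) (hg : ContinuousOn g (Icc a b)) :
    ∀ᵐ s ∂μ, s ∈ Ioc a b → g s = 0 := by
  rw [ae_iff]
  refine measure_null_of_locally_null _ fun s hs => ?_
  obtain ⟨⟨has, hsb⟩, hgs⟩ : s ∈ Ioc a b ∧ g s ≠ 0 := Classical.not_imp.1 hs
  have hev : ∀ᶠ u in 𝓝[Icc a b] s, |g s| / 2 < |g u| :=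
    (hg s ⟨has.le, hsb⟩).abs.eventually (eventually_gt_nhds (half_lt_self (abs_pos.2 hgs)))
  obtain ⟨η, hη, hball⟩ := Metric.mem_nhdsWithin_iff.1 hev
  set x := max a (s - η / 2)
  set y := min b (s + η / 2)
  have hxy : x ≤ y :=
    max_le (le_min (has.le.trans hsb) (by linarith)) (le_min (by linarith) (by linarith))
  have hnull : μ (Ioc x y) = 0 := by
    refine (h.mono (le_max_left _ _) (min_le_left _ _)).measure_Ioc_eq_zero hxy
      (half_pos (abs_pos.2 hgs)) fun u hu => hball ⟨?_, ?_⟩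
    · rw [Metric.mem_ball, Real.dist_eq, abs_lt]
      constructor <;> linarith [le_max_right a (s - η / 2), min_le_right b (s + η / 2), hu.1, hu.2]
    · exact ⟨(le_max_left _ _).trans hu.1, hu.2.trans (min_le_left _ _)⟩
  refine ⟨_, inter_mem_nhdsWithin _ (Ioo_mem_nhds (by linarith : s - η / 2 < s)
    (by linarith : s < s + η / 2)), measure_mono_null ?_ hnull⟩
  rintro u ⟨hu, huη⟩
  obtain ⟨⟨hau, hub⟩, -⟩ : u ∈ Ioc a b ∧ g u ≠ 0 := Classical.not_imp.1 hu
  exact ⟨max_lt hau huη.1, le_min hub huη.2.le⟩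

end IsLocalTimeMeasure

section AngularComponent

variable {x₁ x₂ : ℝ → ℝ} {a b : ℝ}

theorem squeezedBetween_occupation_arctan_div {m M ℓ : ℝ} (hab : a ≤ b)
    (hx₁ : ContinuousOn x₁ (Icc a b)) (hx₂ : ContinuousOn x₂ (Icc a b)) (hm0 : 0 < m)
    (hm : ∀ s ∈ Icc a b, m ≤ x₁ s) (hM : ∀ s ∈ Icc a b, x₁ s ≤ M)
    (hℓ : Tendsto (fun ε => 1 / (2 * ε) * occupation x₂ a b ε) (𝓝[>] 0) (𝓝 ℓ)) :
    SqueezedBetween (𝓝[>] 0)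
      (fun ε => 1 / (2 * ε) * occupation (fun s => arctan (x₂ s / x₁ s)) a b ε)
      (m * ℓ) (M * ℓ) := by
  have hM0 : 0 < M := hm0.trans_le ((hm a ⟨le_rfl, hab⟩).trans (hM a ⟨le_rfl, hab⟩))
  have hφ : ContinuousOn (fun s => arctan (x₂ s / x₁ s)) (Icc a b) :=
    continuous_arctan.comp_continuousOn (hx₂.div hx₁ fun s hs => (hm0.trans_le (hm s hs)).ne')
  refine ⟨_, _, tendsto_comp_mul_tan hm0 hℓ, tendsto_comp_mul_tan hM0 hℓ, ?_⟩
  filter_upwards [Ioo_mem_nhdsGT (show (0 : ℝ) < π / 2 by positivity)] with ε ⟨hε0, hεπ⟩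
  have htan : 0 < tan ε := tan_pos_of_pos_of_lt_pi_div_two hε0 hεπ
  have hmem_iff : ∀ s ∈ Icc a b, arctan (x₂ s / x₁ s) ∈ Icc (-ε) ε ↔ |x₂ s| ≤ x₁ s * tan ε := by
    intro s hs
    have hx : 0 < x₁ s := hm0.trans_le (hm s hs)
    rw [arctan_mem_Icc_iff hε0 hεπ, mem_Icc, ← abs_le, abs_div, abs_of_pos hx, div_le_iff₀ hx,
      mul_comm]
  constructor
  · refine mul_le_mul_of_nonneg_left (occupation_mono hab hx₂ hφ fun s hs hmem => ?_)
      (by positivity)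
    rw [mem_Icc, ← abs_le] at hmem
    exact (hmem_iff s hs).2 (hmem.trans (mul_le_mul_of_nonneg_right (hm s hs) htan.le))
  · refine mul_le_mul_of_nonneg_left (occupation_mono hab hφ hx₂ fun s hs hmem => ?_)
      (by positivity)
    rw [mem_Icc, ← abs_le]
    exact ((hmem_iff s hs).1 hmem).trans (mul_le_mul_of_nonneg_right (hM s hs) htan.le)

theorem exists_squeezedBetween_occupation_arctan_div {μ : Measure ℝ} {θ : ℝ} (hab : a ≤ b)
    (hx₁ : ContinuousOn x₁ (Icc a b)) (hx₂ : ContinuousOn x₂ (Icc a b)) (hθ : 0 < θ)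
    (hθx₁ : ∀ s ∈ Icc a b, θ < x₁ s) (hμ : IsLocalTimeMeasure x₂ μ a b) :
    ∃ A B, A ≤ ∫ s in Ioc a b, x₁ s ∂μ ∧ ∫ s in Ioc a b, x₁ s ∂μ ≤ B ∧
      B - A ≤ 2 * θ * μ.real (Ioc a b) ∧
      SqueezedBetween (𝓝[>] 0)
        (fun ε => 1 / (2 * ε) * occupation (fun s => arctan (x₂ s / x₁ s)) a b ε) A B := by
  have hφ : ContinuousOn (fun s => arctan (x₂ s / x₁ s)) (Icc a b) :=
    continuous_arctan.comp_continuousOn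
      (hx₂.div hx₁ fun s hs => (hθ.trans (hθx₁ s hs)).ne')
  have hint : ∀ x y, a ≤ x → x ≤ y → y ≤ b → IntegrableOn x₁ (Ioc x y) μ := fun x y hax hxy hyb =>
    (hx₁.mono (Icc_subset_Icc hax hyb)).integrableOn_Ioc_of_ne_top (hμ x y hax hxy hyb).1
  obtain ⟨κ, hκ, hclose⟩ := Metric.uniformContinuousOn_iff.1
    (isCompact_Icc.uniformContinuousOn_of_continuous hx₁) θ hθ
  refine holds_of_trans_of_sub_lt (P := fun x y => ∃ A B, A ≤ ∫ s in Ioc x y, x₁ s ∂μ ∧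
    ∫ s in Ioc x y, x₁ s ∂μ ≤ B ∧ B - A ≤ 2 * θ * μ.real (Ioc x y) ∧
    SqueezedBetween (𝓝[>] 0)
      (fun ε => 1 / (2 * ε) * occupation (fun s => arctan (x₂ s / x₁ s)) x y ε) A B)
    hκ hab ?_ ?_
  · rintro x y z hax hxy hyz hzb ⟨A, B, hA, hB, hAB, hsq⟩ ⟨A', B', hA', hB', hAB', hsq'⟩
    have hunion := Ioc_union_Ioc_eq_Ioc hxy hyz
    have hdisj : Disjoint (Ioc x y) (Ioc y z) := Ioc_disjoint_Ioc_of_le le_rfl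
    have hI : ∫ s in Ioc x z, x₁ s ∂μ = ∫ s in Ioc x y, x₁ s ∂μ + ∫ s in Ioc y z, x₁ s ∂μ := by
      rw [← hunion, setIntegral_union hdisj measurableSet_Ioc
        (hint x y hax hxy (hyz.trans hzb)) (hint y z (hax.trans hxy) hyz hzb)]
    have hμxz : μ.real (Ioc x z) = μ.real (Ioc x y) + μ.real (Ioc y z) := by
      rw [← hunion, measureReal_union hdisj measurableSet_Ioc
        (hμ x y hax hxy (hyz.trans hzb)).1 (hμ y z (hax.trans hxy) hyz hzb).1]
    have hocc : ∀ ε, occupation (fun s => arctan (x₂ s / x₁ s)) x z ε =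
        occupation (fun s => arctan (x₂ s / x₁ s)) x y ε +
          occupation (fun s => arctan (x₂ s / x₁ s)) y z ε := fun ε =>
      (occupation_add hxy hyz (hφ.mono (Icc_subset_Icc hax hzb))).symm
    refine ⟨A + A', B + B', by linarith, by linarith, by rw [hμxz]; linarith, ?_⟩
    simpa only [hocc, mul_add] using hsq.add hsq'
  · intro x y hax hxy hyb hyx
    have hsub : Icc x y ⊆ Icc a b := Icc_subset_Icc hax hyb
    have hnear : ∀ s ∈ Icc x y, |x₁ s - x₁ x| < θ := fun s hs => by
      refine hclose s (hsub hs) x (hsub ⟨le_rfl, hxy⟩) ?_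
      rw [Real.dist_eq, abs_lt]
      constructor <;> linarith [hs.1, hs.2]
    obtain ⟨hfin, hℓ⟩ := hμ x y hax hxy hyb
    refine ⟨(x₁ x - θ) * μ.real (Ioc x y), (x₁ x + θ) * μ.real (Ioc x y), ?_, ?_, by linarith,
      squeezedBetween_occupation_arctan_div hxy (hx₁.mono hsub) (hx₂.mono hsub)
        (by linarith [hθx₁ x (hsub ⟨le_rfl, hxy⟩)])
        (fun s hs => by linarith [(abs_lt.1 (hnear s hs)).1])
        (fun s hs => by linarith [(abs_lt.1 (hnear s hs)).2]) hℓ⟩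
    · exact setIntegral_ge_of_const_le_real measurableSet_Ioc hfin
        (fun s hs => by linarith [(abs_lt.1 (hnear s (Ioc_subset_Icc_self hs))).1])
        (hint x y hax hxy hyb)
    · calc ∫ s in Ioc x y, x₁ s ∂μ ≤ ∫ _ in Ioc x y, (x₁ x + θ) ∂μ :=
            setIntegral_mono_on (hint x y hax hxy hyb) (integrableOn_const hfin)
              measurableSet_Ioc
              fun s hs => by linarith [(abs_lt.1 (hnear s (Ioc_subset_Icc_self hs))).2]
        _ = (x₁ x + θ) * μ.real (Ioc x y) := by rw [setIntegral_const, smul_eq_mul, mul_comm]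

end AngularComponent

theorem local_time_angular_component_general
    (T : ℝ)
    (x₁ x₂ : ℝ → ℝ)
    (hx₁ : ContinuousOn x₁ (Icc 0 T)) (hx₂ : ContinuousOn x₂ (Icc 0 T))
    (hx₁pos : ∀ s ∈ Icc (0:ℝ) T, 0 < x₁ s)
    (L : ℝ → ℝ)
    (hLlim : ∀ t ∈ Icc (0:ℝ) T,
      Tendsto (fun ε : ℝ =>
          (1 / (2 * ε)) * ∫ s in (0:ℝ)..t, (Icc (-ε) ε).indicator (fun _ => (1:ℝ)) (x₂ s))
        (nhdsWithin 0 (Ioi 0)) (nhds (L t)))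
    (μ : Measure ℝ)
    (hμ : ∀ a b : ℝ, 0 ≤ a → a ≤ b → b ≤ T → μ (Ioc a b) = ENNReal.ofReal (L b - L a)) :
    ∀ t ∈ Icc (0:ℝ) T,
      Tendsto (fun ε : ℝ =>
          (1 / (2 * ε)) *
            ∫ s in (0:ℝ)..t,
              (Icc (-ε) ε).indicator (fun _ => (1:ℝ)) (Real.arctan (x₂ s / x₁ s)))
        (nhdsWithin 0 (Ioi 0))
        (nhds (∫ s in Ioc (0:ℝ) t, Real.sqrt ((x₁ s) ^ 2 + (x₂ s) ^ 2) ∂μ)) := by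
  rintro t ⟨ht0, htT⟩
  have hsub : Icc 0 t ⊆ Icc 0 T := Icc_subset_Icc_right htT
  have hloc : IsLocalTimeMeasure x₂ μ 0 t :=
    (IsLocalTimeMeasure.of_tendsto hx₂ hLlim hμ).mono le_rfl htT
  have hradius : ∫ s in Ioc 0 t, √(x₁ s ^ 2 + x₂ s ^ 2) ∂μ = ∫ s in Ioc 0 t, x₁ s ∂μ := by
    refine setIntegral_congr_ae measurableSet_Ioc ?_
    filter_upwards [hloc.ae_eq_zero (hx₂.mono hsub)] with s hs0 hs
    rw [hs0 hs, zero_pow two_ne_zero, add_zero,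
      sqrt_sq (hx₁pos s (hsub (Ioc_subset_Icc_self hs))).le]
  rw [hradius]
  obtain ⟨m, hm0, hm⟩ : ∃ m > 0, ∀ s ∈ Icc 0 t, m ≤ x₁ s := by
    obtain ⟨s₀, hs₀, hmin⟩ := isCompact_Icc.exists_isMinOn (nonempty_Icc.2 ht0) (hx₁.mono hsub)
    exact ⟨x₁ s₀, hx₁pos s₀ (hsub hs₀), fun s hs => hmin hs⟩
  refine tendsto_of_forall_squeezedBetween fun η hη => ?_
  set V := μ.real (Ioc 0 t)
  set θ := min (m / 2) (η / (2 * (V + 1)))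
  have hV : 0 ≤ V := measureReal_nonneg
  have hθ : 0 < θ := lt_min (half_pos hm0) (by positivity)
  obtain ⟨A, B, hA, hB, hAB, hsq⟩ := exists_squeezedBetween_occupation_arctan_div ht0
    (hx₁.mono hsub) (hx₂.mono hsub) hθ
    (fun s hs => (min_le_left _ _).trans_lt ((half_lt_self hm0).trans_le (hm s hs))) hloc
  refine ⟨A, B, hA, hB, hAB.trans ?_, hsq⟩
  calc 2 * θ * V ≤ 2 * (η / (2 * (V + 1))) * V := by gcongr; exact min_le_right _ _
    _ = η * (V / (V + 1)) := by field_simp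
    _ ≤ η := mul_le_of_le_one_right hη.le ((div_le_one (by positivity)).2 (by linarith))

/-- Lemma 3 of the paper (deterministic form, in the half-plane `x₁ > 0`): if the path
`x = (x₁, x₂)` is continuous with `x₁ > 0`, and `x₂` has a local time `L` at level `0`,
then the angular component `φ = arctan(x₂/x₁)` has a local time at level `0`, equal to
the Stieltjes integral `∫₀ᵗ r(s) dL(s)` of the radius `r = √(x₁² + x₂²)` against `L`.
The Stieltjes integral is encoded via a measure `μ` with `μ(Ioc a b) = L b - L a`
for `0 ≤ a ≤ b ≤ T`. -/
theorem local_time_angular_component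
    (T : ℝ) (hT : 0 < T)
    (x₁ x₂ : ℝ → ℝ)
    (hx₁ : ContinuousOn x₁ (Icc 0 T)) (hx₂ : ContinuousOn x₂ (Icc 0 T))
    (hx₁pos : ∀ s ∈ Icc (0:ℝ) T, 0 < x₁ s)
    (L : ℝ → ℝ)
    (hLlim : ∀ t ∈ Icc (0:ℝ) T,
      Tendsto (fun ε : ℝ =>
          (1 / (2 * ε)) * ∫ s in (0:ℝ)..t, (Icc (-ε) ε).indicator (fun _ => (1:ℝ)) (x₂ s))
        (nhdsWithin 0 (Ioi 0)) (nhds (L t)))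
    (hLmono : MonotoneOn L (Icc 0 T)) (hL0 : L 0 = 0)
    (hLcont : ContinuousOn L (Icc 0 T))
    (μ : Measure ℝ)
    (hμ : ∀ a b : ℝ, 0 ≤ a → a ≤ b → b ≤ T → μ (Ioc a b) = ENNReal.ofReal (L b - L a)) :
    ∀ t ∈ Icc (0:ℝ) T,
      Tendsto (fun ε : ℝ =>
          (1 / (2 * ε)) *
            ∫ s in (0:ℝ)..t,
              (Icc (-ε) ε).indicator (fun _ => (1:ℝ)) (Real.arctan (x₂ s / x₁ s)))
        (nhdsWithin 0 (Ioi 0))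
        (nhds (∫ s in Ioc (0:ℝ) t, Real.sqrt ((x₁ s) ^ 2 + (x₂ s) ^ 2) ∂μ)) :=
  local_time_angular_component_general T x₁ x₂ hx₁ hx₂ hx₁pos L hLlim μ hμ
end

section
/- Let T > 0, let y : [0,T] → ℝ be continuous, and let ρ : [0,T] → ℝ be continuous with strictly positive values. Define A(t) = ∫₀ᵗ ρ(s) ds for t ∈ [0,T], and let A⁻¹ : [0, A(T)] → [0,T] be the inverse of the strictly increasing function A. Assume that for every t ∈ [0,T] the limit L(t) := lim_{ε→0+} (1/(2ε)) ∫₀ᵗ 1_{[−ε,ε]}(y(s)) ds exists and the resulting function L is continuous. Then for every t ∈ [0, A(T)], lim_{ε→0+} (1/(2ε)) ∫₀ᵗ 1_{[−ε,ε]}(y(A⁻¹(s))) ds = ∫₀^{A⁻¹(t)} ρ(s) dL(s); that is, the local time at level 0 of the time-changed path y ∘ A⁻¹ equals the Stieltjes integral of ρ against the local time of y, stopped at A⁻¹(t). -/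
/-!
Substituting `s = A u` turns the occupation integral of `y ∘ A⁻¹` up to `t` into
`∫₀^{A⁻¹ t} ρ u · 1_{[-ε,ε]}(y u) du`. The measures `(2ε)⁻¹ 1_{[-ε,ε]}(y u) du` give every interval
`(c, d] ⊆ [0, A⁻¹ t]` a mass converging to `L d - L c = μ (c, d]`. Since `ρ` is uniformly close to
a step function on a fine partition, the integrals of `ρ` against these measures are uniformly
close to Riemann–Stieltjes sums, which converge to those of `ρ` against `μ`.
-/

open MeasureTheory Filter Set Topology

theorem tendsto_of_forall_dist_le_of_tendsto {ι α : Type*} [PseudoMetricSpace α] {l : Filter ι}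
    {F : ι → α} {x : α}
    (h : ∀ η > 0, ∃ (G : ι → α) (y : α),
      Tendsto G l (𝓝 y) ∧ (∀ᶠ i in l, dist (F i) (G i) ≤ η) ∧ dist y x ≤ η) :
    Tendsto F l (𝓝 x) := by
  refine Metric.tendsto_nhds.2 fun δ hδ => ?_
  obtain ⟨G, y, hG, hFG, hyx⟩ := h (δ / 3) (by positivity)
  filter_upwards [hFG, Metric.tendsto_nhds.1 hG (δ / 3) (by positivity)] with i hFGi hGi
  calc dist (F i) x ≤ dist (F i) (G i) + dist (G i) y + dist y x := dist_triangle4 _ _ _ _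
    _ < δ := by linarith

theorem ContinuousOn.exists_partition_abs_sub_le {ρ : ℝ → ℝ} {a b η : ℝ}
    (hρ : ContinuousOn ρ (Icc a b)) (hab : a ≤ b) (hη : 0 < η) :
    ∃ (n : ℕ) (p : ℕ → ℝ), Monotone p ∧ p 0 = a ∧ p n = b ∧
      ∀ i < n, ∀ x ∈ Icc (p i) (p (i + 1)), |ρ x - ρ (p i)| ≤ η := by
  obtain ⟨δ, hδ, hρδ⟩ := Metric.uniformContinuousOn_iff_le.1
    (isCompact_Icc.uniformContinuousOn_of_continuous hρ) η hη
  obtain ⟨n, hn⟩ := exists_nat_gt ((b - a) / δ)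
  have hn0 : (0 : ℝ) < n := (div_nonneg (sub_nonneg.2 hab) hδ.le).trans_lt hn
  have hstep : (b - a) / n ≤ δ := by
    rw [div_le_iff₀ hn0]; rw [div_lt_iff₀ hδ] at hn; linarith
  set p : ℕ → ℝ := fun i => a + i * ((b - a) / n) with hp
  have hp_mono : Monotone p := fun i j hij => by simp only [hp]; gcongr
  have hpn : p n = b := by simp only [hp]; field_simp; ring
  refine ⟨n, p, hp_mono, by simp [hp], hpn, fun i hi x hx => ?_⟩
  have hp_mem : ∀ j ≤ n, p j ∈ Icc a b := fun j hj =>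
    ⟨by simpa [hp] using hp_mono (Nat.zero_le j), hpn ▸ hp_mono hj⟩
  have hpi := hp_mem i hi.le
  have hx_mem : x ∈ Icc a b := ⟨hpi.1.trans hx.1, hx.2.trans (hp_mem (i + 1) hi).2⟩
  rw [← Real.dist_eq]
  refine hρδ x hx_mem (p i) hpi ?_
  rw [Real.dist_eq, abs_of_nonneg (sub_nonneg.2 hx.1)]
  have hp_succ : p (i + 1) = p i + (b - a) / n := by simp only [hp]; push_cast; ring
  linarith [hx.2]

theorem abs_setIntegral_sub_mul_measureReal_le {α : Type*} [MeasurableSpace α] {ν : Measure α}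
    {s : Set α} {ρ : α → ℝ} {c δ : ℝ} (hs : ν s < ⊤) (hρ : IntegrableOn ρ s ν)
    (hρc : ∀ x ∈ s, |ρ x - c| ≤ δ) :
    |∫ x in s, ρ x ∂ν - c * ν.real s| ≤ δ * ν.real s := by
  have hc : IntegrableOn (fun _ => c) s ν := integrableOn_const hs.ne
  rw [mul_comm c, ← smul_eq_mul, ← setIntegral_const, ← integral_sub hρ hc]
  exact norm_setIntegral_le_of_norm_le_const (f := fun x => ρ x - c) hs hρc

theorem abs_setIntegral_Ioc_sub_sum_le {ν : Measure ℝ} {ρ : ℝ → ℝ} {p : ℕ → ℝ} {δ : ℝ}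
    (hp : Monotone p) (n : ℕ) (hν : ν (Ioc (p 0) (p n)) < ⊤)
    (hρ : IntegrableOn ρ (Ioc (p 0) (p n)) ν)
    (hρp : ∀ i < n, ∀ x ∈ Ioc (p i) (p (i + 1)), |ρ x - ρ (p i)| ≤ δ) :
    |∫ x in Ioc (p 0) (p n), ρ x ∂ν -
        ∑ i ∈ Finset.range n, ρ (p i) * ν.real (Ioc (p i) (p (i + 1)))| ≤
      δ * ν.real (Ioc (p 0) (p n)) := by
  induction n with
  | zero => simp
  | succ n ih =>
    have hsplit := Ioc_union_Ioc_eq_Ioc (hp (Nat.zero_le n)) (hp n.le_succ)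
    have hsub₁ : Ioc (p 0) (p n) ⊆ Ioc (p 0) (p (n + 1)) := hsplit ▸ subset_union_left
    have hsub₂ : Ioc (p n) (p (n + 1)) ⊆ Ioc (p 0) (p (n + 1)) := hsplit ▸ subset_union_right
    have hdisj : Disjoint (Ioc (p 0) (p n)) (Ioc (p n) (p (n + 1))) :=
      Ioc_disjoint_Ioc_of_le le_rfl
    have hν₂ := (measure_mono hsub₂).trans_lt hν
    have hlast := abs_setIntegral_sub_mul_measureReal_le hν₂ (hρ.mono_set hsub₂)
      (hρp n n.lt_succ_self)
    have hfirst := ih ((measure_mono hsub₁).trans_lt hν) (hρ.mono_set hsub₁)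
      fun i hi => hρp i (hi.trans n.lt_succ_self)
    rw [← hsplit, setIntegral_union hdisj measurableSet_Ioc (hρ.mono_set hsub₁)
      (hρ.mono_set hsub₂), measureReal_union hdisj measurableSet_Ioc
      ((measure_mono hsub₁).trans_lt hν).ne hν₂.ne, Finset.sum_range_succ, add_sub_add_comm,
      mul_add]
    exact (abs_add_le _ _).trans (add_le_add hfirst hlast)

theorem ContinuousOn.integrableOn_Ioc_of_measure_lt_top {ν : Measure ℝ} {ρ : ℝ → ℝ} {a b : ℝ}
    (hρ : ContinuousOn ρ (Icc a b)) (hν : ν (Ioc a b) < ⊤) : IntegrableOn ρ (Ioc a b) ν := by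
  have : IsFiniteMeasure (ν.restrict (Ioc a b)) := isFiniteMeasure_restrict.2 hν.ne
  have h := hρ.integrableOn_compact (μ := ν.restrict (Ioc a b)) isCompact_Icc
  rwa [IntegrableOn, Measure.restrict_restrict measurableSet_Icc,
    inter_eq_right.2 Ioc_subset_Icc_self] at h

theorem tendsto_setIntegral_Ioc_of_tendsto_measureReal_Ioc {ι : Type*} {l : Filter ι}
    {ν : ι → Measure ℝ} {μ : Measure ℝ} {ρ : ℝ → ℝ} {a b : ℝ} (hab : a ≤ b)
    (hρ : ContinuousOn ρ (Icc a b)) (hμ : μ (Ioc a b) < ⊤) (hν : ∀ᶠ i in l, ν i (Ioc a b) < ⊤)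
    (hlim : ∀ c d, a ≤ c → c ≤ d → d ≤ b →
      Tendsto (fun i => (ν i).real (Ioc c d)) l (𝓝 (μ.real (Ioc c d)))) :
    Tendsto (fun i => ∫ x in Ioc a b, ρ x ∂ν i) l (𝓝 (∫ x in Ioc a b, ρ x ∂μ)) := by
  refine tendsto_of_forall_dist_le_of_tendsto fun η hη => ?_
  set M := μ.real (Ioc a b) + 1
  have hM : 0 < M := by positivity
  obtain ⟨n, p, hp, rfl, rfl, hρp⟩ := hρ.exists_partition_abs_sub_le hab (div_pos hη hM)
  have hρp' : ∀ i < n, ∀ x ∈ Ioc (p i) (p (i + 1)), |ρ x - ρ (p i)| ≤ η / M :=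
    fun i hi x hx => hρp i hi x (Ioc_subset_Icc_self hx)
  have hp_mem : ∀ i ≤ n, p 0 ≤ p i ∧ p i ≤ p n := fun i hi => ⟨hp i.zero_le, hp hi⟩
  have hriemann (κ : Measure ℝ) (hκ : κ (Ioc (p 0) (p n)) < ⊤)
      (hκM : κ.real (Ioc (p 0) (p n)) ≤ M) :
      |∫ x in Ioc (p 0) (p n), ρ x ∂κ -
        ∑ i ∈ Finset.range n, ρ (p i) * κ.real (Ioc (p i) (p (i + 1)))| ≤ η :=
    calc _ ≤ η / M * κ.real (Ioc (p 0) (p n)) := abs_setIntegral_Ioc_sub_sum_le hp n hκ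
            (hρ.integrableOn_Ioc_of_measure_lt_top hκ) hρp'
      _ ≤ η / M * M := by gcongr
      _ = η := div_mul_cancel₀ η hM.ne'
  refine ⟨fun i => ∑ k ∈ Finset.range n, ρ (p k) * (ν i).real (Ioc (p k) (p (k + 1))),
    ∑ k ∈ Finset.range n, ρ (p k) * μ.real (Ioc (p k) (p (k + 1))), ?_, ?_, ?_⟩
  · refine tendsto_finsetSum _ fun k hk => (hlim _ _ ?_ (hp k.le_succ) ?_).const_mul _
    · exact (hp_mem k (Finset.mem_range.1 hk).le).1
    · exact (hp_mem (k + 1) (Finset.mem_range.1 hk)).2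
  · have hνM : ∀ᶠ i in l, (ν i).real (Ioc (p 0) (p n)) < M :=
      (hlim _ _ le_rfl hab le_rfl).eventually (gt_mem_nhds (lt_add_one _))
    filter_upwards [hν, hνM] with i hνi hνMi
    rw [Real.dist_eq]
    exact hriemann (ν i) hνi hνMi.le
  · rw [Real.dist_eq, abs_sub_comm]
    exact hriemann μ hμ (lt_add_one _).le

section WithDensityOfReal

variable {α : Type*} [MeasurableSpace α] {μ : Measure α} {f : α → ℝ} {s : Set α}

theorem withDensity_ofReal_apply_eq_ofReal_setIntegral (hs : MeasurableSet s)
    (hf : IntegrableOn f s μ) (hf0 : ∀ x ∈ s, 0 ≤ f x) :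
    μ.withDensity (fun x => ENNReal.ofReal (f x)) s = ENNReal.ofReal (∫ x in s, f x ∂μ) := by
  rw [withDensity_apply _ hs,
    ofReal_integral_eq_lintegral_ofReal hf ((ae_restrict_iff' hs).2 (ae_of_all _ hf0))]

theorem setIntegral_withDensity_ofReal (hs : MeasurableSet s) (hf : AEMeasurable f (μ.restrict s))
    (hf0 : ∀ x ∈ s, 0 ≤ f x) (g : α → ℝ) :
    ∫ x in s, g x ∂μ.withDensity (fun x => ENNReal.ofReal (f x)) = ∫ x in s, f x * g x ∂μ := by
  rw [setIntegral_withDensity_eq_setIntegral_toReal_smul₀ hf.ennreal_ofReal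
    (ae_of_all _ fun _ => ENNReal.ofReal_lt_top) g hs]
  exact setIntegral_congr_fun hs fun x hx => by
    rw [ENNReal.toReal_ofReal (hf0 x hx), smul_eq_mul]

end WithDensityOfReal

theorem tendsto_intervalIntegral_mul_of_tendsto_primitive {ι : Type*} {l : Filter ι}
    {f : ι → ℝ → ℝ} {F : ℝ → ℝ} {μ : Measure ℝ} {ρ : ℝ → ℝ} {a b : ℝ} (hab : a ≤ b)
    (hρ : ContinuousOn ρ (Icc a b)) (hf_int : ∀ᶠ i in l, IntegrableOn (f i) (Icc a b))
    (hf_nonneg : ∀ᶠ i in l, ∀ x ∈ Icc a b, 0 ≤ f i x)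
    (hF : ∀ x ∈ Icc a b, Tendsto (fun i => ∫ s in a..x, f i s) l (𝓝 (F x)))
    (hμ : ∀ c d, a ≤ c → c ≤ d → d ≤ b → μ (Ioc c d) = ENNReal.ofReal (F d - F c)) :
    Tendsto (fun i => ∫ x in a..b, ρ x * f i x) l (𝓝 (∫ x in Ioc a b, ρ x ∂μ)) := by
  set ν : ι → Measure ℝ := fun i => volume.withDensity fun x => ENNReal.ofReal (f i x)
  have hsub {c d : ℝ} (hc : a ≤ c) (hd : d ≤ b) : Ioc c d ⊆ Icc a b :=
    Ioc_subset_Icc_self.trans (Icc_subset_Icc hc hd)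
  have hν {c d : ℝ} (hc : a ≤ c) (hcd : c ≤ d) (hd : d ≤ b) :
      ∀ᶠ i in l, ν i (Ioc c d) = ENNReal.ofReal (∫ x in c..d, f i x) := by
    filter_upwards [hf_int, hf_nonneg] with i hi hi0
    rw [intervalIntegral.integral_of_le hcd]
    exact withDensity_ofReal_apply_eq_ofReal_setIntegral measurableSet_Ioc
      (hi.mono_set (hsub hc hd)) fun x hx => hi0 x (hsub hc hd hx)
  have hintegral : ∀ᶠ i in l, ∫ x in Ioc a b, ρ x ∂ν i = ∫ x in a..b, ρ x * f i x := by
    filter_upwards [hf_int, hf_nonneg] with i hi hi0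
    rw [intervalIntegral.integral_of_le hab, setIntegral_withDensity_ofReal measurableSet_Ioc
      (hi.mono_set (hsub le_rfl le_rfl)).aemeasurable (fun x hx => hi0 x (hsub le_rfl le_rfl hx))]
    simp only [mul_comm]
  refine (tendsto_setIntegral_Ioc_of_tendsto_measureReal_Ioc hab hρ ?_ ?_ ?_).congr' hintegral
  · exact (hμ a b le_rfl hab le_rfl).trans_lt ENNReal.ofReal_lt_top
  · exact (hν le_rfl hab le_rfl).mono fun i hi => hi ▸ ENNReal.ofReal_lt_top
  · intro c d hc hcd hd
    have hlim : Tendsto (fun i => ∫ x in c..d, f i x) l (𝓝 (F d - F c)) := by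
      refine ((hF d ⟨hc.trans hcd, hd⟩).sub (hF c ⟨hc, hcd.trans hd⟩)).congr' ?_
      filter_upwards [hf_int] with i hi
      have hi' (x : ℝ) (hax : a ≤ x) (hxb : x ≤ b) : IntervalIntegrable (f i) volume a x :=
        (intervalIntegrable_iff_integrableOn_Icc_of_le hax).2
          (hi.mono_set (Icc_subset_Icc_right hxb))
      exact intervalIntegral.integral_interval_sub_left (hi' d (hc.trans hcd) hd)
        (hi' c hc (hcd.trans hd))
    rw [measureReal_def, hμ c d hc hcd hd, ENNReal.toReal_ofReal']
    refine (hlim.max tendsto_const_nhds).congr' ?_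
    filter_upwards [hν hc hcd hd] with i hi
    rw [measureReal_def, hi, ENNReal.toReal_ofReal']

theorem integral_comp_of_leftInvOn_primitive {ρ Ainv : ℝ → ℝ} {a b : ℝ} (hab : a ≤ b)
    (hρ : ContinuousOn ρ (Icc a b)) (hρ0 : ∀ x ∈ Icc a b, 0 ≤ ρ x)
    (hinv : ∀ x ∈ Icc a b, Ainv (∫ s in a..x, ρ s) = x) (h : ℝ → ℝ) :
    ∫ u in (0 : ℝ)..∫ s in a..b, ρ s, h (Ainv u) = ∫ x in a..b, ρ x * h x := by
  have hA_cont : ContinuousOn (fun x => ∫ s in a..x, ρ s) (Icc a b) := by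
    rw [← uIcc_of_le hab] at hρ ⊢
    exact intervalIntegral.continuousOn_primitive_interval hρ.integrableOn_uIcc
  have hA_deriv : ∀ x ∈ Ioo a b, HasDerivAt (fun x => ∫ s in a..x, ρ s) (ρ x) x := fun x hx =>
    intervalIntegral.integral_hasDerivAt_right
      ((hρ.mono (Icc_subset_Icc_right hx.2.le)).intervalIntegrable_of_Icc hx.1.le)
      ((hρ.mono Ioo_subset_Icc_self).stronglyMeasurableAtFilter isOpen_Ioo x hx)
      (hρ.continuousAt (Icc_mem_nhds hx.1 hx.2))
  have hcov := integral_Icc_deriv_smul_of_deriv_nonneg (g := fun u => h (Ainv u)) hA_cont hA_deriv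
    (fun x hx => hρ0 x (Ioo_subset_Icc_self hx)) hab
  rw [intervalIntegral.integral_same] at hcov
  rw [intervalIntegral.integral_of_le (intervalIntegral.integral_nonneg hab hρ0),
    ← integral_Icc_eq_integral_Ioc, ← hcov, intervalIntegral.integral_of_le hab,
    ← integral_Icc_eq_integral_Ioc]
  exact setIntegral_congr_fun measurableSet_Icc fun x hx => by
    rw [smul_eq_mul, hinv x hx]

theorem local_time_time_change_general
    (T : ℝ)
    (y : ℝ → ℝ) (hy : ContinuousOn y (Icc 0 T))
    (ρ : ℝ → ℝ) (hρ : ContinuousOn ρ (Icc 0 T)) (hρpos : ∀ s ∈ Icc (0:ℝ) T, 0 < ρ s)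
    (A : ℝ → ℝ) (hA : ∀ t, A t = ∫ s in (0:ℝ)..t, ρ s)
    (Ainv : ℝ → ℝ)
    (hAinvmem : ∀ t ∈ Icc (0:ℝ) (A T), Ainv t ∈ Icc (0:ℝ) T)
    (hAinvright : ∀ t ∈ Icc (0:ℝ) (A T), A (Ainv t) = t)
    (hAinvleft : ∀ t ∈ Icc (0:ℝ) T, Ainv (A t) = t)
    (L : ℝ → ℝ)
    (hLlim : ∀ t ∈ Icc (0:ℝ) T,
      Tendsto (fun ε : ℝ =>
          (1 / (2 * ε)) * ∫ s in (0:ℝ)..t, (Icc (-ε) ε).indicator (fun _ => (1:ℝ)) (y s))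
        (nhdsWithin 0 (Ioi 0)) (nhds (L t)))
    (μ : Measure ℝ)
    (hμ : ∀ a b : ℝ, 0 ≤ a → a ≤ b → b ≤ T → μ (Ioc a b) = ENNReal.ofReal (L b - L a)) :
    ∀ t ∈ Icc (0:ℝ) (A T),
      Tendsto (fun ε : ℝ =>
          (1 / (2 * ε)) *
            ∫ s in (0:ℝ)..t, (Icc (-ε) ε).indicator (fun _ => (1:ℝ)) (y (Ainv s)))
        (nhdsWithin 0 (Ioi 0)) (nhds (∫ s in Ioc (0:ℝ) (Ainv t), ρ s ∂μ)) := by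
  intro t ht
  obtain ⟨hτ0, hτT⟩ := hAinvmem t ht
  set τ := Ainv t
  set g : ℝ → ℝ → ℝ := fun ε s => (Icc (-ε) ε).indicator (fun _ => (1 : ℝ)) (y s)
  have hg_int (ε : ℝ) : IntegrableOn (g ε) (Icc 0 T) :=
    Integrable.mono' (integrableOn_const (C := (1 : ℝ)) measure_Icc_lt_top.ne)
      ((measurable_const.indicator measurableSet_Icc).comp_aemeasurable
        (hy.aemeasurable measurableSet_Icc)).aestronglyMeasurable
      (ae_of_all _ fun s => (norm_indicator_le_norm_self _ _).trans norm_one.le)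
  have hchange (ε : ℝ) : ∫ s in (0 : ℝ)..t, g ε (Ainv s) = ∫ s in (0 : ℝ)..τ, ρ s * g ε s := by
    rw [← hAinvright t ht, hA]
    exact integral_comp_of_leftInvOn_primitive hτ0 (hρ.mono (Icc_subset_Icc_right hτT))
      (fun s hs => (hρpos s ⟨hs.1, hs.2.trans hτT⟩).le)
      (fun s hs => hA s ▸ hAinvleft s ⟨hs.1, hs.2.trans hτT⟩) (g ε)
  have hlim := tendsto_intervalIntegral_mul_of_tendsto_primitive (l := 𝓝[>] 0)
    (f := fun ε s => 1 / (2 * ε) * g ε s) (F := L) hτ0 (hρ.mono (Icc_subset_Icc_right hτT))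
    (Eventually.of_forall fun ε => ((hg_int ε).mono_set (Icc_subset_Icc_right hτT)).const_mul _)
    (eventually_mem_nhdsWithin.mono fun ε (hε : 0 < ε) s _ =>
      mul_nonneg (by positivity) (indicator_nonneg (fun _ _ => zero_le_one) _))
    (fun s hs => by
      simpa only [intervalIntegral.integral_const_mul] using hLlim s ⟨hs.1, hs.2.trans hτT⟩)
    (fun c d hc hcd hd => hμ c d hc hcd (hd.trans hτT))
  refine hlim.congr fun ε => ?_
  change _ = 1 / (2 * ε) * ∫ s in (0 : ℝ)..t, g ε (Ainv s)
  rw [hchange, ← intervalIntegral.integral_const_mul]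
  simp only [mul_left_comm]

/-- Lemma 4 of the paper (deterministic form): if `y` has a local time `L` at level `0` on
`[0,T]` and `A(t) = ∫₀ᵗ ρ(s) ds` with `ρ` continuous and positive, then the time-changed
path `y ∘ A⁻¹` has a local time at level `0` given by `∫₀^{A⁻¹(t)} ρ(s) dL(s)`.
The Stieltjes integral is encoded via a measure `μ` with `μ(Ioc a b) = L b - L a`
for `0 ≤ a ≤ b ≤ T`. -/
theorem local_time_time_change
    (T : ℝ) (hT : 0 < T)
    (y : ℝ → ℝ) (hy : ContinuousOn y (Icc 0 T))
    (ρ : ℝ → ℝ) (hρ : ContinuousOn ρ (Icc 0 T)) (hρpos : ∀ s ∈ Icc (0:ℝ) T, 0 < ρ s)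
    (A : ℝ → ℝ) (hA : ∀ t, A t = ∫ s in (0:ℝ)..t, ρ s)
    (Ainv : ℝ → ℝ)
    (hAinvmem : ∀ t ∈ Icc (0:ℝ) (A T), Ainv t ∈ Icc (0:ℝ) T)
    (hAinvright : ∀ t ∈ Icc (0:ℝ) (A T), A (Ainv t) = t)
    (hAinvleft : ∀ t ∈ Icc (0:ℝ) T, Ainv (A t) = t)
    (L : ℝ → ℝ)
    (hLlim : ∀ t ∈ Icc (0:ℝ) T,
      Tendsto (fun ε : ℝ =>
          (1 / (2 * ε)) * ∫ s in (0:ℝ)..t, (Icc (-ε) ε).indicator (fun _ => (1:ℝ)) (y s))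
        (nhdsWithin 0 (Ioi 0)) (nhds (L t)))
    (hLmono : MonotoneOn L (Icc 0 T)) (hL0 : L 0 = 0)
    (hLcont : ContinuousOn L (Icc 0 T))
    (μ : Measure ℝ)
    (hμ : ∀ a b : ℝ, 0 ≤ a → a ≤ b → b ≤ T → μ (Ioc a b) = ENNReal.ofReal (L b - L a)) :
    ∀ t ∈ Icc (0:ℝ) (A T),
      Tendsto (fun ε : ℝ =>
          (1 / (2 * ε)) *
            ∫ s in (0:ℝ)..t, (Icc (-ε) ε).indicator (fun _ => (1:ℝ)) (y (Ainv s)))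
        (nhdsWithin 0 (Ioi 0)) (nhds (∫ s in Ioc (0:ℝ) (Ainv t), ρ s ∂μ)) :=
  local_time_time_change_general T y hy ρ hρ hρpos A hA Ainv hAinvmem hAinvright hAinvleft L hLlim μ
    hμ
end

section
/- In the cyclic-chain setup, assume 0 < p_k < 1 for every k. Define r̃_k = p̃_k/q̃_k and S_k = Σ_{m=0}^{n−1} Π_{i=1}^{m} r̃_{k−i} (the empty product for m = 0 being 1, indices mod n). Then the vector π with π_k = (S_k/q̃_k) / (Σ_{j=1}^{n} S_j/q̃_j) is a stationary distribution of the cyclic chain: each π_k > 0, Σ_k π_k = 1, and π_k = π_{k−1} p̃_{k−1} + π_{k+1} q̃_{k+1} for every k (indices mod n). -/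
/-!
Write `w_k = S_k / q̃_k`. Splitting the `(n+1)`-term sum `∑_{m ≤ n} ∏_{i < m} r̃_{k-i}` once at
its first and once at its last term gives the recurrence `S_{k+1} = 1 + r̃_k S_k - R`, where
`R = ∏_j r̃_j` does not depend on `k`. Since `1 / q̃_k = 1 + r̃_k`, the balance equation
`w_k = w_{k-1} p̃_{k-1} + w_{k+1} q̃_{k+1}` reads `S_k + r̃_k S_k = r̃_{k-1} S_{k-1} + S_{k+1}`,
which is the sum of the recurrence at `k - 1` and at `k`. Everything is positive, so normalising
`w` gives the stationary distribution.
-/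

open Finset

namespace CyclicChain

section Recurrence

variable {n : ℕ}

theorem prod_range_natCast_eq_prod_univ [NeZero n] {M : Type*} [CommMonoid M]
    (f : ZMod n → M) :
    ∏ i ∈ range n, f (i : ZMod n) = ∏ j : ZMod n, f j := by
  refine prod_nbij' (fun i => (i : ZMod n)) ZMod.val (fun _ _ => mem_univ _)
    (fun j _ => mem_range.mpr (ZMod.val_lt j)) (fun i hi => ?_)
    (fun j _ => ZMod.natCast_zmod_val j) (fun _ _ => rfl)
  exact ZMod.val_cast_of_lt (mem_range.mp hi)

theorem prod_range_succ_sub_succ {M : Type*} [CommMonoid M] (r : ZMod n → M) (k : ZMod n)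
    (m : ℕ) :
    ∏ i ∈ range (m + 1), r (k + 1 - ((i : ZMod n) + 1)) =
      r k * ∏ i ∈ range m, r (k - ((i : ZMod n) + 1)) := by
  rw [prod_range_succ', mul_comm]
  push_cast
  congr 1
  · exact congrArg r (by ring)
  · exact prod_congr rfl fun i _ => congrArg r (by ring)

theorem sum_prod_range_sub_succ [NeZero n] {R : Type*} [CommRing R] (r : ZMod n → R)
    (k : ZMod n) :
    ∑ m ∈ range n, ∏ i ∈ range m, r (k + 1 - ((i : ZMod n) + 1)) =
      1 + r k * ∑ m ∈ range n, ∏ i ∈ range m, r (k - ((i : ZMod n) + 1)) - ∏ j, r j := by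
  have hfull : ∏ i ∈ range n, r (k + 1 - ((i : ZMod n) + 1)) = ∏ j, r j := by
    simp_rw [add_sub_add_right_eq_sub]
    rw [prod_range_natCast_eq_prod_univ (fun j => r (k - j))]
    exact Equiv.prod_comp (Equiv.subLeft k) r
  have hsplit := sum_range_succ (fun m => ∏ i ∈ range m, r (k + 1 - ((i : ZMod n) + 1))) n
  rw [sum_range_succ', prod_range_zero, hfull] at hsplit
  simp_rw [prod_range_succ_sub_succ, ← mul_sum] at hsplit
  linear_combination -hsplit

end Recurrence

theorem balance_of_recurrence {ι K : Type*} [AddGroupWithOne ι] [Field K]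
    (pt qt rt S : ι → K) (c : K) (hsum : ∀ k, pt k + qt k = 1) (hqt : ∀ k, qt k ≠ 0)
    (hrt : ∀ k, rt k = pt k / qt k) (hrec : ∀ k, S (k + 1) = 1 + rt k * S k - c) (k : ι) :
    S k / qt k = S (k - 1) / qt (k - 1) * pt (k - 1) + S (k + 1) / qt (k + 1) * qt (k + 1) := by
  have hprev := hrec (k - 1)
  rw [sub_add_cancel] at hprev
  have hcur : S k / qt k = S k + rt k * S k := by
    rw [hrt, eq_sub_of_add_eq (hsum k)]
    field_simp [hqt k]
    ring
  have hlast : S (k - 1) / qt (k - 1) * pt (k - 1) = rt (k - 1) * S (k - 1) := by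
    rw [hrt]
    ring
  rw [hcur, hlast, div_mul_cancel₀ _ (hqt _), hrec k]
  linear_combination hprev

end CyclicChain

open CyclicChain in
theorem cyclic_chain_stationary_formula_general
    (n : ℕ) [NeZero n]
    (ξ p : ZMod n → ℝ)
    (hξ : ∀ k, 0 < ξ k) (hp : ∀ k, 0 < p k ∧ p k < 1)
    (pt qt rt S π : ZMod n → ℝ)
    (hpt : ∀ k, pt k = p k * ξ (k - 1) / (p k * ξ (k - 1) + (1 - p k) * ξ k))
    (hqt : ∀ k, qt k = (1 - p k) * ξ k / (p k * ξ (k - 1) + (1 - p k) * ξ k))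
    (hrt : ∀ k, rt k = pt k / qt k)
    (hS : ∀ k, S k = ∑ m ∈ Finset.range n, ∏ i ∈ Finset.range m, rt (k - ((i : ZMod n) + 1)))
    (hπ : ∀ k, π k = (S k / qt k) / ∑ j ∈ Finset.range n, S (j : ZMod n) / qt (j : ZMod n)) :
    (∀ k, 0 < π k) ∧
    (∑ k ∈ Finset.range n, π (k : ZMod n)) = 1 ∧
    (∀ k : ZMod n, π k = π (k - 1) * pt (k - 1) + π (k + 1) * qt (k + 1)) := by
  have hpos : ∀ k, 0 < p k * ξ (k - 1) ∧ 0 < (1 - p k) * ξ k := fun k =>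
    ⟨mul_pos (hp k).1 (hξ _), mul_pos (sub_pos.mpr (hp k).2) (hξ k)⟩
  have hptpos k : 0 < pt k := hpt k ▸ div_pos (hpos k).1 (add_pos (hpos k).1 (hpos k).2)
  have hqtpos k : 0 < qt k := hqt k ▸ div_pos (hpos k).2 (add_pos (hpos k).1 (hpos k).2)
  have hsum k : pt k + qt k = 1 := by
    rw [hpt, hqt, ← add_div, div_self (add_pos (hpos k).1 (hpos k).2).ne']
  have hSpos k : 0 < S k := hS k ▸ sum_pos
    (fun _ _ => prod_pos fun _ _ => hrt _ ▸ div_pos (hptpos _) (hqtpos _))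
    (nonempty_range_iff.mpr (NeZero.ne n))
  have hZpos : 0 < ∑ j ∈ range n, S (j : ZMod n) / qt (j : ZMod n) :=
    sum_pos (fun _ _ => div_pos (hSpos _) (hqtpos _)) (nonempty_range_iff.mpr (NeZero.ne n))
  have hrec k : S (k + 1) = 1 + rt k * S k - ∏ j, rt j := by
    rw [hS, hS, sum_prod_range_sub_succ]
  refine ⟨fun k => hπ k ▸ div_pos (div_pos (hSpos k) (hqtpos k)) hZpos, ?_, fun k => ?_⟩
  · simp only [hπ, ← sum_div, div_self hZpos.ne']
  · rw [hπ k, hπ (k - 1), hπ (k + 1),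
      balance_of_recurrence pt qt rt S _ hsum (fun k => (hqtpos k).ne') hrt hrec k]
    ring

/-- Explicit stationary distribution of the cyclic chain (formula (14) of the paper),
when `0 < p_k < 1` for all `k`. States are indexed by `ZMod n`. -/
theorem cyclic_chain_stationary_formula
    (n : ℕ) [NeZero n] (hn : 2 ≤ n)
    (ξ p : ZMod n → ℝ)
    (hξ : ∀ k, 0 < ξ k) (hp : ∀ k, 0 < p k ∧ p k < 1)
    (pt qt rt S π : ZMod n → ℝ)
    (hpt : ∀ k, pt k = p k * ξ (k - 1) / (p k * ξ (k - 1) + (1 - p k) * ξ k))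
    (hqt : ∀ k, qt k = (1 - p k) * ξ k / (p k * ξ (k - 1) + (1 - p k) * ξ k))
    (hrt : ∀ k, rt k = pt k / qt k)
    (hS : ∀ k, S k = ∑ m ∈ Finset.range n, ∏ i ∈ Finset.range m, rt (k - ((i : ZMod n) + 1)))
    (hπ : ∀ k, π k = (S k / qt k) / ∑ j ∈ Finset.range n, S (j : ZMod n) / qt (j : ZMod n)) :
    (∀ k, 0 < π k) ∧
    (∑ k ∈ Finset.range n, π (k : ZMod n)) = 1 ∧
    (∀ k : ZMod n, π k = π (k - 1) * pt (k - 1) + π (k + 1) * qt (k + 1)) :=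
  cyclic_chain_stationary_formula_general n ξ p hξ hp pt qt rt S π hpt hqt hrt hS hπ
end

section
/- In the cyclic-chain setup, assume 0 < p_k < 1 for every k and that p₁·p₂·⋯·pₙ = q₁·q₂·⋯·qₙ. Then the vector π defined by π₁ = 1 / (1 + Σ_{k=2}^{n} (p̃₁ p̃₂ ⋯ p̃_{k−1})/(q̃₂ q̃₃ ⋯ q̃_k)) and π_k = π₁ · (p̃₁ p̃₂ ⋯ p̃_{k−1})/(q̃₂ q̃₃ ⋯ q̃_k) for k = 2,…,n is a stationary distribution of the cyclic chain. -/
/-!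
The weights satisfy detailed balance `π k * p̃ k = π (k + 1) * q̃ (k + 1)`. Along the path
`1 → 2 → ⋯ → n` this is just the telescoping of the product formula; on the closing edge `n → 1`
it amounts to `∏ p̃ k = ∏ q̃ k`, which follows from `∏ p k = ∏ q k` because the normalising
denominators are common to both sides and `∏ ξ (k - 1) = ∏ ξ k` cyclically. Detailed balance
together with `p̃ k + q̃ k = 1` gives stationarity.
-/

open Finset

namespace Finset

@[to_additive sum_Icc_one_eq_sum_range_of_eq]
theorem prod_Icc_one_eq_prod_range_of_eq {M : Type*} [CommMonoid M] {n : ℕ} (g : ℕ → M)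
    (h : g n = g 0) : ∏ i ∈ Icc 1 n, g i = ∏ i ∈ range n, g i := by
  rcases n with _ | m
  · rfl
  · rw [prod_Icc_succ_top (by omega), h, prod_range_eq_mul_Ico g (by omega), mul_comm]
    rfl

end Finset

namespace ZMod

variable {n : ℕ} [NeZero n]

theorem prod_range_natCast {M : Type*} [CommMonoid M] (f : ZMod n → M) :
    ∏ i ∈ range n, f i = ∏ k, f k := by
  refine (prod_range (fun i => f i)).trans (Fintype.prod_bijective _ ?_ _ _ fun _ => rfl)
  refine (Fintype.bijective_iff_surjective_and_card _).2 ⟨fun k => ?_, by simp⟩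
  exact ⟨⟨k.val, k.val_lt⟩, k.natCast_zmod_val⟩

theorem exists_mem_Icc_natCast_eq (k : ZMod n) : ∃ m ∈ Icc 1 n, (m : ZMod n) = k := by
  by_cases hk : k = 0
  · exact ⟨n, mem_Icc.2 ⟨NeZero.one_le, le_rfl⟩, by simp [hk]⟩
  · refine ⟨k.val, mem_Icc.2 ⟨?_, k.val_lt.le⟩, k.natCast_zmod_val⟩
    exact Nat.one_le_iff_ne_zero.2 ((val_ne_zero k).2 hk)

theorem prod_Icc_one_natCast {M : Type*} [CommMonoid M] (f : ZMod n → M) :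
    ∏ i ∈ Icc 1 n, f i = ∏ k, f k := by
  rw [prod_Icc_one_eq_prod_range_of_eq (fun i : ℕ => f i) (by simp), prod_range_natCast]

end ZMod

theorem Fintype.prod_mul_sub_one_div_eq_of_prod_eq {G K : Type*} [AddGroupWithOne G] [Fintype G]
    [DivisionCommMonoid K] {p q ξ D : G → K} (h : ∏ k, p k = ∏ k, q k) :
    ∏ k, p k * ξ (k - 1) / D k = ∏ k, q k * ξ k / D k := by
  simp only [prod_div_distrib, prod_mul_distrib, h]
  rw [Fintype.prod_equiv (Equiv.subRight 1) (fun k => ξ (k - 1)) ξ fun _ => rfl]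

theorem stationary_of_detailed_balance {G R : Type*} [AddGroupWithOne G] [Semiring R]
    {π pt qt : G → R} (hsum : ∀ k, pt k + qt k = 1)
    (hdb : ∀ k, π k * pt k = π (k + 1) * qt (k + 1)) (k : G) :
    π k = π (k - 1) * pt (k - 1) + π (k + 1) * qt (k + 1) := by
  have hprev := hdb (k - 1)
  rw [sub_add_cancel] at hprev
  rw [hprev, ← hdb k, add_comm, ← mul_add, hsum, mul_one]

section pathWeight

variable {K : Type*} [Field K]

def pathWeight (a b : ℕ → K) (m : ℕ) : K :=
  (∏ j ∈ Icc 1 (m - 1), a j) / ∏ j ∈ Icc 2 m, b j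

variable {a b : ℕ → K} {m : ℕ}

@[simp]
theorem pathWeight_one : pathWeight a b 1 = 1 := by
  simp [pathWeight]

theorem pathWeight_mul_self (hm : 1 ≤ m) :
    pathWeight a b m * a m = (∏ j ∈ Icc 1 m, a j) / ∏ j ∈ Icc 2 m, b j := by
  obtain ⟨m, rfl⟩ := Nat.exists_eq_add_of_le' hm
  rw [pathWeight, Nat.add_sub_cancel, div_mul_eq_mul_div, ← prod_Icc_succ_top (by omega)]

theorem pathWeight_succ_mul (hm : 1 ≤ m) (hb : b (m + 1) ≠ 0) :
    pathWeight a b (m + 1) * b (m + 1) = pathWeight a b m * a m := by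
  rw [pathWeight_mul_self hm, pathWeight, Nat.add_sub_cancel, prod_Icc_succ_top (by omega),
    div_mul_eq_div_div, div_mul_cancel₀ _ hb]

theorem pathWeight_mul_eq_of_prod_eq (hm : 1 ≤ m)
    (hprod : ∏ j ∈ Icc 1 m, a j = ∏ j ∈ Icc 1 m, b j) (hb : ∏ j ∈ Icc 2 m, b j ≠ 0) :
    pathWeight a b m * a m = b 1 := by
  rw [pathWeight_mul_self hm, hprod, ← mul_prod_Ioc_eq_prod_Icc hm]
  exact mul_div_cancel_right₀ _ hb

theorem sum_Icc_one_pathWeight (hm : 1 ≤ m) :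
    ∑ j ∈ Icc 1 m, pathWeight a b j = 1 + ∑ j ∈ Icc 2 m, pathWeight a b j := by
  rw [← add_sum_Ioc_eq_sum_Icc hm, pathWeight_one]
  rfl

theorem pathWeight_pos [LinearOrder K] [IsStrictOrderedRing K] (ha : ∀ j, 0 < a j)
    (hb : ∀ j, 0 < b j) : 0 < pathWeight a b m :=
  div_pos (prod_pos fun j _ => ha j) (prod_pos fun j _ => hb j)

end pathWeight

theorem detailed_balance_of_eq_mul_pathWeight {K : Type*} [Field K] {n : ℕ} [NeZero n]
    {π pt qt : ZMod n → K} {c : K} (hqt : ∀ k, qt k ≠ 0)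
    (hcycle : ∏ j ∈ Icc 1 n, pt j = ∏ j ∈ Icc 1 n, qt j)
    (hπ : ∀ m ∈ Icc 1 n, π m = c * pathWeight (fun j => pt j) (fun j => qt j) m) (k : ZMod n) :
    π k * pt k = π (k + 1) * qt (k + 1) := by
  obtain ⟨m, hm, rfl⟩ := ZMod.exists_mem_Icc_natCast_eq k
  obtain ⟨hm1, hmn⟩ := mem_Icc.1 hm
  rcases hmn.lt_or_eq with hlt | hmn
  · rw [hπ m hm, ← Nat.cast_succ, hπ (m + 1) (mem_Icc.2 ⟨by omega, hlt⟩), mul_assoc, mul_assoc,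
      pathWeight_succ_mul hm1 (hqt _)]
  · subst m
    have hwrap : (n : ZMod n) + 1 = ((1 : ℕ) : ZMod n) := by simp
    rw [hwrap, hπ n hm, hπ 1 (mem_Icc.2 ⟨le_rfl, hm1⟩), mul_assoc,
      pathWeight_mul_eq_of_prod_eq hm1 hcycle (prod_ne_zero_iff.2 fun j _ => hqt _),
      pathWeight_one, mul_one]

theorem cyclic_chain_stationary_formula_balanced_general
    (n : ℕ) [NeZero n]
    (ξ p : ZMod n → ℝ)
    (hξ : ∀ k, 0 < ξ k) (hp : ∀ k, 0 < p k ∧ p k < 1)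
    (hbal : (∏ k ∈ Finset.range n, p (k : ZMod n)) =
      ∏ k ∈ Finset.range n, (1 - p (k : ZMod n)))
    (pt qt π : ZMod n → ℝ)
    (hpt : ∀ k, pt k = p k * ξ (k - 1) / (p k * ξ (k - 1) + (1 - p k) * ξ k))
    (hqt : ∀ k, qt k = (1 - p k) * ξ k / (p k * ξ (k - 1) + (1 - p k) * ξ k))
    (hπ1 : π 1 = 1 / (1 + ∑ k ∈ Finset.Icc 2 n,
      (∏ j ∈ Finset.Icc 1 (k - 1), pt (j : ZMod n)) /
        (∏ j ∈ Finset.Icc 2 k, qt (j : ZMod n))))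
    (hπk : ∀ k ∈ Finset.Icc 2 n, π (k : ZMod n) = π 1 *
      ((∏ j ∈ Finset.Icc 1 (k - 1), pt (j : ZMod n)) /
        (∏ j ∈ Finset.Icc 2 k, qt (j : ZMod n)))) :
    (∀ k, 0 ≤ π k) ∧
    (∑ k ∈ Finset.range n, π (k : ZMod n)) = 1 ∧
    (∀ k : ZMod n, π k = π (k - 1) * pt (k - 1) + π (k + 1) * qt (k + 1)) := by
  set w := pathWeight (fun j => pt (j : ZMod n)) (fun j => qt (j : ZMod n))
  have ha : ∀ k, 0 < p k * ξ (k - 1) := fun k => mul_pos (hp k).1 (hξ _)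
  have hb : ∀ k, 0 < (1 - p k) * ξ k := fun k => mul_pos (sub_pos.2 (hp k).2) (hξ k)
  have hpt_pos : ∀ k, 0 < pt k := fun k => hpt k ▸ div_pos (ha k) (add_pos (ha k) (hb k))
  have hqt_pos : ∀ k, 0 < qt k := fun k => hqt k ▸ div_pos (hb k) (add_pos (ha k) (hb k))
  have hsum : ∀ k, pt k + qt k = 1 := fun k => by
    rw [hpt, hqt, ← add_div, div_self (add_pos (ha k) (hb k)).ne']
  have hcycle : ∏ j ∈ Icc 1 n, pt j = ∏ j ∈ Icc 1 n, qt j := by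
    rw [ZMod.prod_range_natCast p, ZMod.prod_range_natCast (fun k => 1 - p k)] at hbal
    rw [ZMod.prod_Icc_one_natCast pt, ZMod.prod_Icc_one_natCast qt, funext hpt, funext hqt]
    exact Fintype.prod_mul_sub_one_div_eq_of_prod_eq hbal
  have hπw : ∀ m ∈ Icc 1 n, π m = π 1 * w m := fun m hm => by
    rcases (mem_Icc.1 hm).1.eq_or_lt with rfl | hm2
    · simp [w]
    · exact hπk m (mem_Icc.2 ⟨hm2, (mem_Icc.1 hm).2⟩)
  have hw_pos : ∀ m, 0 < w m := fun m => pathWeight_pos (fun _ => hpt_pos _) fun _ => hqt_pos _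
  have hw_sum_pos : 0 < ∑ m ∈ Icc 1 n, w m :=
    sum_pos (fun m _ => hw_pos m) (nonempty_Icc.2 NeZero.one_le)
  have hπ1_eq_inv : π 1 = (∑ m ∈ Icc 1 n, w m)⁻¹ := by
    rw [sum_Icc_one_pathWeight NeZero.one_le, hπ1, one_div]
    rfl
  refine ⟨fun k => ?_, ?_, stationary_of_detailed_balance hsum
    (detailed_balance_of_eq_mul_pathWeight (fun k => (hqt_pos k).ne') hcycle hπw)⟩
  · obtain ⟨m, hm, rfl⟩ := ZMod.exists_mem_Icc_natCast_eq k
    rw [hπw m hm, hπ1_eq_inv]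
    exact (mul_pos (inv_pos.2 hw_sum_pos) (hw_pos m)).le
  · rw [← sum_Icc_one_eq_sum_range_of_eq (fun j : ℕ => π j) (by simp), sum_congr rfl hπw, ← mul_sum,
      hπ1_eq_inv, inv_mul_cancel₀ hw_sum_pos.ne']

/-- Explicit stationary distribution of the cyclic chain (formula (15) of the paper),
in the case `p₁⋯pₙ = q₁⋯qₙ` with `0 < p_k < 1` for all `k`.
States are indexed by `ZMod n`, the paper's state `k ∈ {1,…,n}` corresponding to the
residue `k mod n`. -/
theorem cyclic_chain_stationary_formula_balanced
    (n : ℕ) [NeZero n] (hn : 2 ≤ n)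
    (ξ p : ZMod n → ℝ)
    (hξ : ∀ k, 0 < ξ k) (hp : ∀ k, 0 < p k ∧ p k < 1)
    (hbal : (∏ k ∈ Finset.range n, p (k : ZMod n)) =
      ∏ k ∈ Finset.range n, (1 - p (k : ZMod n)))
    (pt qt π : ZMod n → ℝ)
    (hpt : ∀ k, pt k = p k * ξ (k - 1) / (p k * ξ (k - 1) + (1 - p k) * ξ k))
    (hqt : ∀ k, qt k = (1 - p k) * ξ k / (p k * ξ (k - 1) + (1 - p k) * ξ k))
    (hπ1 : π 1 = 1 / (1 + ∑ k ∈ Finset.Icc 2 n,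
      (∏ j ∈ Finset.Icc 1 (k - 1), pt (j : ZMod n)) /
        (∏ j ∈ Finset.Icc 2 k, qt (j : ZMod n))))
    (hπk : ∀ k ∈ Finset.Icc 2 n, π (k : ZMod n) = π 1 *
      ((∏ j ∈ Finset.Icc 1 (k - 1), pt (j : ZMod n)) /
        (∏ j ∈ Finset.Icc 2 k, qt (j : ZMod n)))) :
    (∀ k, 0 ≤ π k) ∧
    (∑ k ∈ Finset.range n, π (k : ZMod n)) = 1 ∧
    (∀ k : ZMod n, π k = π (k - 1) * pt (k - 1) + π (k + 1) * qt (k + 1)) :=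
  cyclic_chain_stationary_formula_balanced_general n ξ p hξ hp hbal pt qt π hpt hqt hπ1 hπk
end

section
/- In the cyclic-chain setup, assume 0 < p̃_k < 1 for every k and set r̃_k = p̃_k/q̃_k. Let π₁,…,πₙ be real numbers satisfying π_k = π_{k−1} p̃_{k−1} + π_{k+1} q̃_{k+1} for every k = 1,…,n with indices taken cyclically mod n, and set C := π₂ q̃₂ − π₁ p̃₁. If r̃₁ r̃₂ ⋯ r̃ₙ ≠ 1, then π₁ = C · (1 + r̃ₙ + r̃_{n−1} r̃ₙ + r̃_{n−2} r̃_{n−1} r̃ₙ + ⋯ + r̃₂ r̃₃ ⋯ r̃ₙ) / (q̃₁ (1 − r̃₁ r̃₂ ⋯ r̃ₙ)). -/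
/-!
The stationarity equations say that the net flow `π (k+1) q̃ (k+1) - π k p̃ k` across the edge
`k → k+1` does not depend on `k`, so it equals `C`. Since `p̃ k = r̃ k q̃ k`, the quantities
`x k = π k q̃ k` then obey the affine recurrence `x (k+1) = r̃ k x k + C`. Unrolling it once around
the cycle returns to `x 1`, giving `x 1 = (r̃₁ ⋯ r̃ₙ) x 1 + C (1 + r̃ₙ + r̃ₙ₋₁ r̃ₙ + ⋯ + r̃₂ ⋯ r̃ₙ)`,
which is solved for `π 1` when `r̃₁ ⋯ r̃ₙ ≠ 1`.
-/

open Finset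

theorem Finset.prod_range_succ_eq_prod_range_of_eq {M : Type*} [CommMonoid M] (f : ℕ → M)
    (n : ℕ) (h : f n = f 0) : ∏ k ∈ range n, f (k + 1) = ∏ k ∈ range n, f k := by
  cases n with
  | zero => simp
  | succ n => rw [prod_range_succ, prod_range_succ', h, mul_comm]

section AffineRecurrence

variable {R : Type*} [CommSemiring R]

theorem sum_prod_range_sub_succ (a : ℕ → R) (m : ℕ) :
    ∑ j ∈ range (m + 1), ∏ i ∈ range j, a (m + 1 - i) =
      a (m + 1) * ∑ j ∈ range m, ∏ i ∈ range j, a (m - i) + 1 := by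
  simp [sum_range_succ', prod_range_succ', mul_sum, mul_comm]

theorem eq_prod_mul_add_sum_of_recurrence {x a : ℕ → R} {c : R}
    (h : ∀ m, x (m + 1) = a (m + 1) * x m + c) (m : ℕ) :
    x m = (∏ k ∈ range m, a (k + 1)) * x 0 + c * ∑ j ∈ range m, ∏ i ∈ range j, a (m - i) := by
  induction m with
  | zero => simp
  | succ m ih =>
    rw [h, ih, prod_range_succ, sum_prod_range_sub_succ]
    ring

end AffineRecurrence

theorem convex_comb_pos {p a b : ℝ} (hp₀ : 0 ≤ p) (hp₁ : p ≤ 1) (ha : 0 < a) (hb : 0 < b) :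
    0 < p * a + (1 - p) * b := by
  simpa using convex_Ioi (0 : ℝ) ha hb hp₀ (sub_nonneg.2 hp₁) (by ring)

namespace CyclicChain

variable {ι : Type*} [AddGroupWithOne ι] {π pt qt : ι → ℝ}

def flux (π pt qt : ι → ℝ) (k : ι) : ℝ := π (k + 1) * qt (k + 1) - π k * pt k

theorem flux_add_one (hsum : ∀ k, pt k + qt k = 1)
    (hstat : ∀ k, π k = π (k - 1) * pt (k - 1) + π (k + 1) * qt (k + 1)) (k : ι) :
    flux π pt qt (k + 1) = flux π pt qt k := by
  have h := hstat (k + 1)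
  rw [add_sub_cancel_right] at h
  unfold flux
  linear_combination -h - π (k + 1) * hsum (k + 1)

theorem flux_add_natCast (hsum : ∀ k, pt k + qt k = 1)
    (hstat : ∀ k, π k = π (k - 1) * pt (k - 1) + π (k + 1) * qt (k + 1)) (k : ι) (m : ℕ) :
    flux π pt qt (k + m) = flux π pt qt k := by
  induction m with
  | zero => simp
  | succ m ih => rw [Nat.cast_succ, ← add_assoc, flux_add_one hsum hstat, ih]

end CyclicChain

open CyclicChain in
theorem cyclic_chain_pi_one_formula_general
    (n : ℕ)
    (ξ p : ZMod n → ℝ)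
    (hξ : ∀ k, 0 < ξ k) (hp : ∀ k, 0 ≤ p k ∧ p k ≤ 1)
    (pt qt rt : ZMod n → ℝ)
    (hpt : ∀ k, pt k = p k * ξ (k - 1) / (p k * ξ (k - 1) + (1 - p k) * ξ k))
    (hqt : ∀ k, qt k = (1 - p k) * ξ k / (p k * ξ (k - 1) + (1 - p k) * ξ k))
    (hpt01 : ∀ k, 0 < pt k ∧ pt k < 1)
    (hrt : ∀ k, rt k = pt k / qt k)
    (π : ZMod n → ℝ)
    (hπstat : ∀ k : ZMod n, π k = π (k - 1) * pt (k - 1) + π (k + 1) * qt (k + 1))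
    (C : ℝ) (hC : C = π 2 * qt 2 - π 1 * pt 1)
    (hprod : (∏ k ∈ Finset.range n, rt (k : ZMod n)) ≠ 1) :
    π 1 = C * (∑ m ∈ Finset.range n, ∏ i ∈ Finset.range m, rt (((n - i : ℕ) : ZMod n))) /
      (qt 1 * (1 - ∏ k ∈ Finset.range n, rt (k : ZMod n))) := by
  have hsum : ∀ k, pt k + qt k = 1 := fun k => by
    rw [hpt, hqt, ← add_div,
      div_self (convex_comb_pos (hp k).1 (hp k).2 (hξ (k - 1)) (hξ k)).ne']
  have hqt_pos : ∀ k, 0 < qt k := fun k => by linarith [hsum k, (hpt01 k).2]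
  have hpt_eq : ∀ k, pt k = rt k * qt k := fun k => by
    rw [hrt, div_mul_cancel₀ _ (hqt_pos k).ne']
  have hflux : ∀ m : ℕ, flux π pt qt (m + 1) = C := fun m => by
    rw [add_comm, flux_add_natCast hsum hπstat, hC, flux, one_add_one_eq_two]
  set x : ℕ → ℝ := fun m => π ((m : ZMod n) + 1) * qt ((m : ZMod n) + 1) with hx
  have hrec : ∀ m : ℕ, x (m + 1) = rt ((m + 1 : ℕ) : ZMod n) * x m + C := fun m => by
    have h := hflux m
    rw [flux, hpt_eq] at h
    simp only [hx, Nat.cast_succ]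
    linear_combination h
  have hcycle := eq_prod_mul_add_sum_of_recurrence (a := fun m : ℕ => rt m) hrec n
  rw [prod_range_succ_eq_prod_range_of_eq (fun k : ℕ => rt k) n (by simp)] at hcycle
  simp only [hx, ZMod.natCast_self, Nat.cast_zero, zero_add] at hcycle
  rw [eq_div_iff (mul_ne_zero (hqt_pos 1).ne' (sub_ne_zero.2 hprod.symm))]
  linear_combination hcycle

/-- The explicit formula for `π₁` in the cyclic chain when `r̃₁⋯r̃ₙ ≠ 1` (the formula for
`π₁` preceding (21) in the paper). States are indexed by `ZMod n`, the paper's index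
`k ∈ {1,…,n}` corresponding to the residue `k mod n`. -/
theorem cyclic_chain_pi_one_formula
    (n : ℕ) [NeZero n] (hn : 2 ≤ n)
    (ξ p : ZMod n → ℝ)
    (hξ : ∀ k, 0 < ξ k) (hp : ∀ k, 0 ≤ p k ∧ p k ≤ 1)
    (pt qt rt : ZMod n → ℝ)
    (hpt : ∀ k, pt k = p k * ξ (k - 1) / (p k * ξ (k - 1) + (1 - p k) * ξ k))
    (hqt : ∀ k, qt k = (1 - p k) * ξ k / (p k * ξ (k - 1) + (1 - p k) * ξ k))
    (hpt01 : ∀ k, 0 < pt k ∧ pt k < 1)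
    (hrt : ∀ k, rt k = pt k / qt k)
    (π : ZMod n → ℝ)
    (hπstat : ∀ k : ZMod n, π k = π (k - 1) * pt (k - 1) + π (k + 1) * qt (k + 1))
    (C : ℝ) (hC : C = π 2 * qt 2 - π 1 * pt 1)
    (hprod : (∏ k ∈ Finset.range n, rt (k : ZMod n)) ≠ 1) :
    π 1 = C * (∑ m ∈ Finset.range n, ∏ i ∈ Finset.range m, rt (((n - i : ℕ) : ZMod n))) /
      (qt 1 * (1 - ∏ k ∈ Finset.range n, rt (k : ZMod n))) :=
  cyclic_chain_pi_one_formula_general n ξ p hξ hp pt qt rt hpt hqt hpt01 hrt π hπstat C hC hprod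
end
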